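/- arXiv:2412.19375 — 5 statements merged into one kernel-verified Lean document; each statement's English description precedes it below -/
import Mathlib

section
/- Let B be the symmetric bilinear form on ℂ⁶ given by B(x,y) = x₁y₂ + x₂y₁ + x₃y₄ + x₄y₃ + x₅y₆ + x₆y₅, and let κ ∈ ℝ⁶ be non-resonant, i.e. B(κ,κ) > 0 and B(κ,δ) ≠ 0 for every nonzero δ ∈ ℤ⁶. Define D_κ := {u ∈ ℂ⁶ : B(u,u) = 0, B(u,ū) > 0, B(u,κ) = 0}, where ū is the componentwise complex conjugate of u (note B(u,ū) is always real). Then the set {u ∈ D_κ : B(u,δ) ≠ 0 for every nonzero δ ∈ ℤ⁶} is dense in D_κ (with the subspace topology from ℂ⁶). -/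
/-- The intersection form of `T⁴`: three orthogonal hyperbolic planes, as a
symmetric bilinear form (over any commutative ring). -/
def Btorus {R : Type*} [CommRing R] (x y : Fin 6 → R) : R :=
  x 0 * y 1 + x 1 * y 0 + x 2 * y 3 + x 3 * y 2 + x 4 * y 5 + x 5 * y 4

/-- The cone over the `κ`-polarized period domain of complex 2-tori:
`{u ∈ ℂ⁶ : B(u,u) = 0, B(u,ū) > 0, B(u,κ) = 0}` (note `B(u,ū)` is always real). -/
def Dtorus (κ : Fin 6 → ℝ) : Set (Fin 6 → ℂ) :=
  {u | Btorus u u = 0 ∧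
    0 < (Btorus u (fun i => (starRingEnd ℂ) (u i))).re ∧
    Btorus u (fun i => (κ i : ℂ)) = 0}

namespace TorusPeriods

open Complex Topology Filter

lemma Bt_symm {R : Type*} [CommRing R] (x y : Fin 6 → R) : Btorus x y = Btorus y x := by
  simp only [Btorus]; ring

lemma Bt_add_left (x y z : Fin 6 → ℂ) :
    Btorus (x + y) z = Btorus x z + Btorus y z := by simp [Btorus]; ring

lemma Bt_add_right (x y z : Fin 6 → ℂ) :
    Btorus x (y + z) = Btorus x y + Btorus x z := by simp [Btorus]; ring

lemma Bt_sub_left (x y z : Fin 6 → ℂ) :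
    Btorus (x - y) z = Btorus x z - Btorus y z := by simp [Btorus]; ring

lemma Bt_sub_right (x y z : Fin 6 → ℂ) :
    Btorus x (y - z) = Btorus x y - Btorus x z := by simp [Btorus]; ring

lemma Bt_smul_left (c : ℂ) (x z : Fin 6 → ℂ) :
    Btorus (c • x) z = c * Btorus x z := by simp [Btorus]; ring

lemma Bt_smul_right (c : ℂ) (x z : Fin 6 → ℂ) :
    Btorus x (c • z) = c * Btorus x z := by simp [Btorus]; ring

lemma Bt_mul_left {R : Type*} [CommRing R] (c : R) (x z : Fin 6 → R) :
    Btorus (fun i => c * x i) z = c * Btorus x z := by simp only [Btorus]; ring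

lemma Bt_conj (x y : Fin 6 → ℂ) :
    Btorus (fun i => (starRingEnd ℂ) (x i)) (fun i => (starRingEnd ℂ) (y i)) =
      (starRingEnd ℂ) (Btorus x y) := by simp [Btorus]

lemma Bt_ofReal (x y : Fin 6 → ℝ) :
    Btorus (fun i => (x i : ℂ)) (fun i => (y i : ℂ)) = ((Btorus x y : ℝ) : ℂ) := by
  simp [Btorus]

/-- Every nonzero integer vector has a nonzero integer vector `B`-orthogonal to it. -/
lemma exists_orth (x : Fin 6 → ℤ) (hx : x ≠ 0) :
    ∃ y : Fin 6 → ℤ, y ≠ 0 ∧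
      Btorus (fun i => (x i : ℝ)) (fun i => (y i : ℝ)) = 0 := by
  have hex : ∃ i, x i ≠ 0 := by
    by_contra h
    push_neg at h
    exact hx (funext h)
  obtain ⟨i, hi⟩ := hex
  fin_cases i
  · refine ⟨fun m => if m = 0 then x 0 else if m = 1 then -x 1 else 0, ?_, ?_⟩
    · intro h; exact hi (by simpa using congrFun h 0)
    · simp (config := { decide := true }) only [Btorus]; push_cast; ring
  · refine ⟨fun m => if m = 1 then x 1 else if m = 0 then -x 0 else 0, ?_, ?_⟩
    · intro h; exact hi (by simpa using congrFun h 1)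
    · simp (config := { decide := true }) only [Btorus]; push_cast; ring
  · refine ⟨fun m => if m = 2 then x 2 else if m = 3 then -x 3 else 0, ?_, ?_⟩
    · intro h; exact hi (by simpa using congrFun h 2)
    · simp (config := { decide := true }) only [Btorus]; push_cast; ring
  · refine ⟨fun m => if m = 3 then x 3 else if m = 2 then -x 2 else 0, ?_, ?_⟩
    · intro h; exact hi (by simpa using congrFun h 3)
    · simp (config := { decide := true }) only [Btorus]; push_cast; ring
  · refine ⟨fun m => if m = 4 then x 4 else if m = 5 then -x 5 else 0, ?_, ?_⟩
    · intro h; exact hi (by simpa using congrFun h 4)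
    · simp (config := { decide := true }) only [Btorus]; push_cast; ring
  · refine ⟨fun m => if m = 5 then x 5 else if m = 4 then -x 4 else 0, ?_, ?_⟩
    · intro h; exact hi (by simpa using congrFun h 5)
    · simp (config := { decide := true }) only [Btorus]; push_cast; ring

/-- The key perturbation lemma: any point of `Dtorus κ` can be approximated by
points of `Dtorus κ` not orthogonal to a given nonzero integral class. -/
lemma exists_close (κ : Fin 6 → ℝ) (hκpos : 0 < Btorus κ κ)
    (hκnr : ∀ δ : Fin 6 → ℤ, δ ≠ 0 → Btorus κ (fun i => (δ i : ℝ)) ≠ 0)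
    (δ : Fin 6 → ℤ) (hδ : δ ≠ 0) (u₀ : Fin 6 → ℂ) (hu : u₀ ∈ Dtorus κ)
    (ε : ℝ) (hε : 0 < ε) :
    ∃ u ∈ Dtorus κ, dist u u₀ < ε ∧ Btorus u (fun i => (δ i : ℂ)) ≠ 0 := by
  obtain ⟨h1, h2, h3⟩ := hu
  obtain ⟨κc, hκc⟩ : ∃ v : Fin 6 → ℂ, v = fun i => ((κ i : ℝ) : ℂ) := ⟨_, rfl⟩
  obtain ⟨δc, hδc⟩ : ∃ v : Fin 6 → ℂ, v = fun i => ((δ i : ℤ) : ℂ) := ⟨_, rfl⟩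
  obtain ⟨ub, hub⟩ : ∃ v : Fin 6 → ℂ, v = fun i => (starRingEnd ℂ) (u₀ i) := ⟨_, rfl⟩
  rw [← hκc] at h3
  rw [show (fun i => (starRingEnd ℂ) (u₀ i)) = ub from hub.symm] at h2
  by_cases h0 : Btorus u₀ δc ≠ 0
  · refine ⟨u₀, ⟨h1, by rw [← hub]; exact h2, by rw [← hκc]; exact h3⟩, by simpa using hε, ?_⟩
    rw [← hδc]; exact h0
  push_neg at h0
  -- basic quantities
  obtain ⟨p, hpdef⟩ : ∃ v : ℂ, v = Btorus u₀ ub := ⟨_, rfl⟩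
  have h2p : 0 < p.re := by rw [hpdef]; exact h2
  have hp : p ≠ 0 := fun h => by rw [h] at h2p; simp at h2p
  have h2' : 0 < (Btorus u₀ ub).re := by rw [← hpdef]; exact h2p
  have hubu : Btorus ub u₀ = p := by rw [Bt_symm, hpdef]
  have huub : Btorus u₀ ub = p := hpdef.symm
  have hubub : Btorus ub ub = 0 := by
    rw [hub, Bt_conj, h1, map_zero]
  have hκconj : (fun i => (starRingEnd ℂ) (κc i)) = κc := by
    funext i; rw [hκc]; exact Complex.conj_ofReal _
  have hubκ : Btorus ub κc = 0 := by
    have h' := Bt_conj u₀ κc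
    rw [hκconj, ← hub] at h'
    rw [h', h3, map_zero]
  have hκu : Btorus κc u₀ = 0 := by rw [Bt_symm]; exact h3
  have hκub : Btorus κc ub = 0 := by rw [Bt_symm]; exact hubκ
  obtain ⟨K, hKdef⟩ : ∃ v : ℂ, v = Btorus κc κc := ⟨_, rfl⟩
  have hKre : K = ((Btorus κ κ : ℝ) : ℂ) := by rw [hKdef, hκc, Bt_ofReal]
  have hK : K ≠ 0 := by
    rw [hKre]; exact_mod_cast hκpos.ne'
  obtain ⟨δr, hδr⟩ : ∃ v : Fin 6 → ℝ, v = fun i => ((δ i : ℤ) : ℝ) := ⟨_, rfl⟩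
  have hδcr : δc = fun i => ((δr i : ℝ) : ℂ) := by
    rw [hδc, hδr]; funext i; simp
  obtain ⟨cre, hcre⟩ : ∃ v : ℝ, v = Btorus κ δr / Btorus κ κ := ⟨_, rfl⟩
  obtain ⟨c, hcdef⟩ : ∃ v : ℂ, v = (cre : ℂ) := ⟨_, rfl⟩
  have hcconj : (starRingEnd ℂ) c = c := by rw [hcdef]; exact Complex.conj_ofReal _
  have hcK : c * K = Btorus κc δc := by
    have hr : cre * Btorus κ κ = Btorus κ δr := by
      rw [hcre]; exact div_mul_cancel₀ _ hκpos.ne'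
    rw [hδcr, hκc, Bt_ofReal, hKre, hcdef]
    exact_mod_cast hr
  have hκδ : Btorus κc δc = c * K := hcK.symm
  obtain ⟨γ, hγdef⟩ : ∃ v : ℂ, v = Btorus ub δc / p := ⟨_, rfl⟩
  have hγp : γ * p = Btorus ub δc := by
    rw [hγdef]; field_simp [hp, hK]
  obtain ⟨d, hddef⟩ : ∃ v : Fin 6 → ℂ, v = δc - c • κc - γ • u₀ := ⟨_, rfl⟩
  -- d ≠ 0
  have hd : d ≠ 0 := by
    intro hd0
    have hcomp : ∀ i, δc i = c * κc i + γ * u₀ i := by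
      intro i
      have h' := congrFun (hddef.symm.trans hd0) i
      simp only [Pi.sub_apply, Pi.smul_apply, smul_eq_mul, Pi.zero_apply] at h'
      linear_combination h'
    have hconj : ∀ i, δc i = c * κc i + (starRingEnd ℂ) γ * ub i := by
      intro i
      have h' := congrArg (starRingEnd ℂ) (hcomp i)
      rw [map_add, map_mul, map_mul, hcconj] at h'
      have e1 : (starRingEnd ℂ) (δc i) = δc i := by rw [hδc]; simp
      have e2 : (starRingEnd ℂ) (κc i) = κc i := by rw [hκc]; exact Complex.conj_ofReal _
      have e3 : (starRingEnd ℂ) (u₀ i) = ub i := by rw [hub]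
      rw [e1, e2, e3] at h'
      exact h'
    have hfun : (fun i => γ * u₀ i) = (fun i => (starRingEnd ℂ) γ * ub i) := by
      funext i
      have ha := hcomp i
      have hb := hconj i
      linear_combination hb - ha
    have hγ0 : γ = 0 := by
      have e1 : Btorus (fun i => γ * u₀ i) ub = γ * p := by
        rw [Bt_mul_left, ← hpdef]
      have e2 : Btorus (fun i => (starRingEnd ℂ) γ * ub i) ub = 0 := by
        rw [Bt_mul_left, hubub, mul_zero]
      rw [hfun, e2] at e1
      exact (mul_eq_zero.mp e1.symm).resolve_right hp
    have hreal : ∀ i, δr i = cre * κ i := by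
      intro i
      have hci := hcomp i
      rw [hγ0, zero_mul, add_zero, hδc, hκc, hcdef] at hci
      have hrr : ((δ i : ℤ) : ℝ) = cre * κ i := by
        exact_mod_cast (show ((δ i : ℤ) : ℂ) = (cre : ℝ) * ((κ i : ℝ) : ℂ) from hci)
      rw [hδr]; exact hrr
    have hcre0 : cre ≠ 0 := by
      obtain ⟨i₀, hi₀⟩ : ∃ i, δ i ≠ 0 := by
        by_contra h
        push_neg at h
        exact hδ (funext h)
      intro hc0
      have h' := hreal i₀
      rw [hc0, zero_mul, hδr] at h'
      exact hi₀ (by exact_mod_cast (show ((δ i₀ : ℤ) : ℝ) = 0 from h'))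
    obtain ⟨y, hy0, hyB⟩ := exists_orth δ hδ
    have hδrk : δr = fun i => cre * κ i := funext hreal
    have hcy : cre * Btorus κ (fun i => (y i : ℝ)) = 0 := by
      rw [← Bt_mul_left, ← hδrk, hδr]
      exact hyB
    exact hκnr y hy0 ((mul_eq_zero.mp hcy).resolve_left hcre0)
  -- the auxiliary vector z with B(z, d) ≠ 0
  obtain ⟨z, hz⟩ : ∃ v : Fin 6 → ℂ, v = fun m : Fin 6 =>
      if m = 0 then (starRingEnd ℂ) (d 1) else if m = 1 then (starRingEnd ℂ) (d 0)
      else if m = 2 then (starRingEnd ℂ) (d 3) else if m = 3 then (starRingEnd ℂ) (d 2)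
      else if m = 4 then (starRingEnd ℂ) (d 5) else (starRingEnd ℂ) (d 4) := ⟨_, rfl⟩
  have hzd : Btorus z d ≠ 0 := by
    have e : ∀ w : ℂ, (starRingEnd ℂ) w * w = (Complex.normSq w : ℂ) := fun w => by
      rw [mul_comm, Complex.mul_conj]
    have hexpand : Btorus z d =
        ((Complex.normSq (d 0) + Complex.normSq (d 1) + Complex.normSq (d 2) +
          Complex.normSq (d 3) + Complex.normSq (d 4) + Complex.normSq (d 5) : ℝ) : ℂ) := by
      rw [hz]
      simp (config := { decide := true }) only [Btorus, if_true, if_false]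
      rw [e, e, e, e, e, e]
      push_cast
      ring
    intro hzd0
    rw [hexpand] at hzd0
    have hsum : Complex.normSq (d 0) + Complex.normSq (d 1) + Complex.normSq (d 2) +
        Complex.normSq (d 3) + Complex.normSq (d 4) + Complex.normSq (d 5) = 0 := by
      exact_mod_cast hzd0
    have n0 := Complex.normSq_nonneg (d 0); have n1 := Complex.normSq_nonneg (d 1)
    have n2 := Complex.normSq_nonneg (d 2); have n3 := Complex.normSq_nonneg (d 3)
    have n4 := Complex.normSq_nonneg (d 4); have n5 := Complex.normSq_nonneg (d 5)
    have d0 : d 0 = 0 := Complex.normSq_eq_zero.mp (by linarith)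
    have d1 : d 1 = 0 := Complex.normSq_eq_zero.mp (by linarith)
    have d2 : d 2 = 0 := Complex.normSq_eq_zero.mp (by linarith)
    have d3 : d 3 = 0 := Complex.normSq_eq_zero.mp (by linarith)
    have d4 : d 4 = 0 := Complex.normSq_eq_zero.mp (by linarith)
    have d5 : d 5 = 0 := Complex.normSq_eq_zero.mp (by linarith)
    exact hd (funext fun i => by fin_cases i <;> assumption)
  -- the tangent vector a
  obtain ⟨a, hadef⟩ : ∃ v : Fin 6 → ℂ,
      v = z - (Btorus z κc / K) • κc - (Btorus z u₀ / p) • ub := ⟨_, rfl⟩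
  have hau : Btorus a u₀ = 0 := by
    rw [hadef, Bt_sub_left, Bt_sub_left, Bt_smul_left, Bt_smul_left, hubu, hκu]
    field_simp [hp, hK]
    ring
  have haκ : Btorus a κc = 0 := by
    rw [hadef, Bt_sub_left, Bt_sub_left, Bt_smul_left, Bt_smul_left, hubκ, ← hKdef]
    field_simp [hp, hK]
    ring
  have haδ : Btorus a δc = Btorus z d := by
    rw [hadef, Bt_sub_left, Bt_sub_left, Bt_smul_left, Bt_smul_left,
      hddef, Bt_sub_right, Bt_sub_right, Bt_smul_right, Bt_smul_right,
      hκδ, ← hγp]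
    field_simp [hp, hK]
  have haδ0 : Btorus a δc ≠ 0 := by rw [haδ]; exact hzd
  have hua : Btorus u₀ a = 0 := by rw [Bt_symm]; exact hau
  -- the correction vector b
  obtain ⟨A2, hA2⟩ : ∃ v : ℂ, v = Btorus a a := ⟨_, rfl⟩
  obtain ⟨A3, hA3⟩ : ∃ v : ℂ, v = Btorus a ub := ⟨_, rfl⟩
  have hA3' : Btorus a ub = A3 := hA3.symm
  have hA2' : Btorus a a = A2 := hA2.symm
  have huba : Btorus ub a = A3 := by rw [Bt_symm]; exact hA3.symm
  obtain ⟨b, hbdef⟩ : ∃ v : Fin 6 → ℂ,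
      v = (-A2 / (2 * p)) • ub + (A3 / (2 * p)) • a + (-(A3 ^ 2) / (4 * p ^ 2)) • u₀ :=
    ⟨_, rfl⟩
  have hub0 : Btorus u₀ b = -(A2 / 2) := by
    rw [hbdef, Bt_add_right, Bt_add_right, Bt_smul_right, Bt_smul_right, Bt_smul_right,
      huub, hua, h1]
    field_simp [hp, hK]
    ring
  have hab : Btorus a b = 0 := by
    rw [hbdef, Bt_add_right, Bt_add_right, Bt_smul_right, Bt_smul_right, Bt_smul_right,
      hA3', hA2', hau]
    field_simp [hp, hK]
    ring
  have hbb : Btorus b b = 0 := by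
    rw [hbdef]
    simp only [Bt_add_left, Bt_add_right, Bt_smul_left, Bt_smul_right]
    rw [hubub, huba, hubu, hA3', hA2', hau, huub, hua, h1]
    field_simp [hp, hK]
    have hpp : p ^ 8 * p⁻¹ ^ 7 = p := by
      rw [inv_pow, ← div_eq_mul_inv, div_eq_iff (pow_ne_zero 7 hp)]
      ring
    ring
  have hbκ : Btorus b κc = 0 := by
    rw [hbdef, Bt_add_left, Bt_add_left, Bt_smul_left, Bt_smul_left, Bt_smul_left,
      hubκ, haκ, h3]
    ring
  have hbu : Btorus b u₀ = -(A2 / 2) := by rw [Bt_symm]; exact hub0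
  have hba : Btorus b a = 0 := by rw [Bt_symm]; exact hab
  -- the curve
  obtain ⟨A1, hA1⟩ : ∃ v : ℂ, v = Btorus a δc := ⟨_, rfl⟩
  have hA1' : Btorus a δc = A1 := hA1.symm
  obtain ⟨W, hW⟩ : ∃ v : ℂ, v = Btorus b δc := ⟨_, rfl⟩
  have hW' : Btorus b δc = W := hW.symm
  obtain ⟨uu, huu⟩ : ∃ v : ℝ → (Fin 6 → ℂ),
      v = fun t : ℝ => u₀ + (t : ℂ) • a + ((t : ℂ) ^ 2) • b := ⟨_, rfl⟩
  have huut : ∀ t : ℝ, uu t = u₀ + (t : ℂ) • a + ((t : ℂ) ^ 2) • b := fun t => by rw [huu]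
  have huu0 : uu 0 = u₀ := by rw [huu]; simp
  have hquad : ∀ t : ℝ, Btorus (uu t) (uu t) = 0 := by
    intro t
    rw [huut t]
    simp only [Bt_add_left, Bt_add_right, Bt_smul_left, Bt_smul_right]
    rw [h1, hua, hau, hub0, hab, hbb, hbu, hba, hA2']
    ring
  have hκuu : ∀ t : ℝ, Btorus (uu t) κc = 0 := by
    intro t
    rw [huut t]
    simp only [Bt_add_left, Bt_smul_left]
    rw [h3, haκ, hbκ]
    ring
  have hδuu : ∀ t : ℝ, Btorus (uu t) δc = (t : ℂ) * (A1 + (t : ℂ) * W) := by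
    intro t
    rw [huut t]
    simp only [Bt_add_left, Bt_smul_left]
    rw [h0, hA1', hW']
    ring
  -- continuity and choice of a small parameter
  have hcont : Continuous fun t : ℝ =>
      (Btorus (uu t) (fun i => (starRingEnd ℂ) (uu t i))).re := by
    rw [huu]
    simp only [Btorus, Pi.add_apply, Pi.smul_apply, smul_eq_mul]
    fun_prop
  have hcont2 : Continuous uu := by
    rw [huu]; fun_prop
  have hE1 : ∀ᶠ t in 𝓝 (0 : ℝ),
      0 < (Btorus (uu t) (fun i => (starRingEnd ℂ) (uu t i))).re := by
    have hf0 : 0 < (Btorus (uu 0) (fun i => (starRingEnd ℂ) (uu 0 i))).re := by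
      rw [huu0, ← hub]
      exact h2'
    exact (hcont.tendsto 0).eventually (eventually_gt_nhds hf0)
  have hE2 : ∀ᶠ t in 𝓝 (0 : ℝ), dist (uu t) u₀ < ε := by
    have hten : Filter.Tendsto uu (𝓝 0) (𝓝 u₀) := by
      have htmp := hcont2.tendsto 0
      rwa [huu0] at htmp
    have hball := hten (Metric.ball_mem_nhds u₀ hε)
    filter_upwards [hball] with t ht
    exact Metric.mem_ball.mp ht
  have hE3 : ∀ᶠ (t : ℝ) in 𝓝 0, A1 + (t : ℂ) * W ≠ 0 := by
    have hgc : Continuous fun t : ℝ => A1 + (t : ℂ) * W := by fun_prop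
    have hg0 : (fun t : ℝ => A1 + (t : ℂ) * W) 0 ≠ 0 := by
      rw [hA1]
      simpa using haδ0
    exact (hgc.tendsto 0).eventually_ne hg0
  have hall := (hE1.and (hE2.and hE3)).filter_mono (nhdsWithin_le_nhds (s := {(0:ℝ)}ᶜ))
  have hne : ∀ᶠ t in 𝓝[≠] (0 : ℝ), t ≠ 0 := self_mem_nhdsWithin
  obtain ⟨t, ⟨ht1, ht2, ht3⟩, ht0⟩ := (hall.and hne).exists
  refine ⟨uu t, ⟨hquad t, ?_, ?_⟩, ht2, ?_⟩
  · exact ht1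
  · rw [← hκc]; exact hκuu t
  · rw [← hδc, hδuu t]
    exact mul_ne_zero (by exact_mod_cast ht0) ht3

end TorusPeriods

theorem generic_periods_dense_torus (κ : Fin 6 → ℝ)
    (hκpos : 0 < Btorus κ κ)
    (hκnr : ∀ δ : Fin 6 → ℤ, δ ≠ 0 → Btorus κ (fun i => (δ i : ℝ)) ≠ 0) :
    Dtorus κ ⊆
      closure {u ∈ Dtorus κ | ∀ δ : Fin 6 → ℤ, δ ≠ 0 →
        Btorus u (fun i => (δ i : ℂ)) ≠ 0} := by
  classical
  -- `Dtorus κ` is locally closed in `ℂ⁶`, hence locally compact, hence a Baire space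
  have hclosed : IsClosed {u : Fin 6 → ℂ |
      Btorus u u = 0 ∧ Btorus u (fun i => ((κ i : ℝ) : ℂ)) = 0} := by
    apply IsClosed.inter
    · exact isClosed_eq (by simp only [Btorus]; fun_prop) continuous_const
    · exact isClosed_eq (by simp only [Btorus]; fun_prop) continuous_const
  have hopen : IsOpen {u : Fin 6 → ℂ |
      0 < (Btorus u (fun i => (starRingEnd ℂ) (u i))).re} := by
    have hc : Continuous fun u : Fin 6 → ℂ =>
        (Btorus u (fun i => (starRingEnd ℂ) (u i))).re := by
      simp only [Btorus]; fun_prop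
    exact isOpen_lt continuous_const hc
  have hDeq : Dtorus κ =
      {u : Fin 6 → ℂ | 0 < (Btorus u (fun i => (starRingEnd ℂ) (u i))).re} ∩
      {u : Fin 6 → ℂ | Btorus u u = 0 ∧ Btorus u (fun i => ((κ i : ℝ) : ℂ)) = 0} := by
    ext u
    constructor
    · rintro ⟨ha, hb, hc⟩; exact ⟨hb, ha, hc⟩
    · rintro ⟨hb, ha, hc⟩; exact ⟨ha, hb, hc⟩
  have hlc : IsLocallyClosed (Dtorus κ) := ⟨_, _, hopen, hclosed, hDeq⟩
  haveI : LocallyCompactSpace (Dtorus κ) := hlc.locallyCompactSpace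
  intro u₀ hu₀
  -- the open dense subsets indexed by nonzero integral classes
  let O : {δ : Fin 6 → ℤ // δ ≠ 0} → Set (Dtorus κ) :=
    fun δ => {x : Dtorus κ | Btorus (x : Fin 6 → ℂ) (fun i => ((δ.1 i : ℤ) : ℂ)) ≠ 0}
  have hOopen : ∀ δ, IsOpen (O δ) := by
    intro δ
    have hc0 : Continuous fun u : Fin 6 → ℂ =>
        Btorus u (fun i => ((δ.1 i : ℤ) : ℂ)) := by
      simp only [Btorus]; fun_prop
    have hc : Continuous fun x : Dtorus κ =>
        Btorus (x : Fin 6 → ℂ) (fun i => ((δ.1 i : ℤ) : ℂ)) := hc0.comp continuous_subtype_val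
    exact isOpen_compl_singleton.preimage hc
  have hOdense : ∀ δ, Dense (O δ) := by
    intro δ
    rw [Metric.dense_iff]
    intro x r hr
    obtain ⟨u, huD, hud, hune⟩ :=
      TorusPeriods.exists_close κ hκpos hκnr δ.1 δ.2 x.1 x.2 r hr
    exact ⟨⟨u, huD⟩, Metric.mem_ball.mpr (by rwa [Subtype.dist_eq]), hune⟩
  have hdense : Dense (⋂ δ, O δ) := dense_iInter_of_isOpen hOopen hOdense
  have hx := hdense ⟨u₀, hu₀⟩
  have hmaps : Set.MapsTo (Subtype.val : Dtorus κ → (Fin 6 → ℂ)) (⋂ δ, O δ)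
      {u ∈ Dtorus κ | ∀ δ : Fin 6 → ℤ, δ ≠ 0 →
        Btorus u (fun i => (δ i : ℂ)) ≠ 0} := by
    intro y hy
    exact ⟨y.2, fun δ hδ => Set.mem_iInter.mp hy ⟨δ, hδ⟩⟩
  exact map_mem_closure continuous_subtype_val hx hmaps
end

section
/- Let B be the symmetric bilinear form on ℂ²² whose Gram matrix is block diagonal consisting of three hyperbolic blocks [[0,1],[1,0]] followed by two copies of the negative of the standard E₈ Cartan matrix, and let κ ∈ ℝ²² satisfy B(κ,κ) > 0 and B(κ,δ) ≠ 0 for every nonzero δ ∈ ℤ²². Define D_κ := {u ∈ ℂ²² : B(u,u) = 0, B(u,ū) > 0, B(u,κ) = 0}, where ū is the componentwise complex conjugate of u (note B(u,ū) is always real). Then the set {u ∈ D_κ : B(u,δ) ≠ 0 for every nonzero δ ∈ ℤ²²} is dense in D_κ. -/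
open Matrix


/-- The Gram matrix of the K3 lattice `U ⊕ U ⊕ U ⊕ E₈(−1) ⊕ E₈(−1)`:
three hyperbolic blocks `[[0,1],[1,0]]` followed by two copies of the negative of
the standard E₈ Cartan matrix. -/
def K3Gram : Matrix (Fin 22) (Fin 22) ℤ := fun i j =>
  if hi : (i : ℕ) < 6 then
    (if hj : (j : ℕ) < 6 then
      (if (i : ℕ) / 2 = (j : ℕ) / 2 ∧ (i : ℕ) % 2 ≠ (j : ℕ) % 2 then 1 else 0)
     else 0)
  else if hi' : (i : ℕ) < 14 then
    (if hj : 6 ≤ (j : ℕ) ∧ (j : ℕ) < 14 then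
      -(CartanMatrix.E₈ ⟨(i : ℕ) - 6, by omega⟩ ⟨(j : ℕ) - 6, by omega⟩)
     else 0)
  else
    (if hj : 14 ≤ (j : ℕ) then
      -(CartanMatrix.E₈ ⟨(i : ℕ) - 14, by omega⟩ ⟨(j : ℕ) - 14, by omega⟩)
     else 0)

/-- The K3 intersection form over any commutative ring. -/
def BK3 {R : Type*} [CommRing R] (x y : Fin 22 → R) : R :=
  ∑ i, ∑ j, (K3Gram i j : R) * x i * y j

def E8inv : Matrix (Fin 8) (Fin 8) ℤ :=
  !![4, 5, 7, 10, 8, 6, 4, 2;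
     5, 8, 10, 15, 12, 9, 6, 3;
     7, 10, 14, 20, 16, 12, 8, 4;
     10, 15, 20, 30, 24, 18, 12, 6;
     8, 12, 16, 24, 20, 15, 10, 5;
     6, 9, 12, 18, 15, 12, 8, 4;
     4, 6, 8, 12, 10, 8, 6, 3;
     2, 3, 4, 6, 5, 4, 3, 2]

def K3GramInv : Matrix (Fin 22) (Fin 22) ℤ := fun i j =>
  if hi : (i : ℕ) < 6 then
    (if hj : (j : ℕ) < 6 then
      (if (i : ℕ) / 2 = (j : ℕ) / 2 ∧ (i : ℕ) % 2 ≠ (j : ℕ) % 2 then 1 else 0)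
     else 0)
  else if hi' : (i : ℕ) < 14 then
    (if hj : 6 ≤ (j : ℕ) ∧ (j : ℕ) < 14 then
      -(E8inv ⟨(i : ℕ) - 6, by omega⟩ ⟨(j : ℕ) - 6, by omega⟩)
     else 0)
  else
    (if hj : 14 ≤ (j : ℕ) then
      -(E8inv ⟨(i : ℕ) - 14, by omega⟩ ⟨(j : ℕ) - 14, by omega⟩)
     else 0)

set_option maxHeartbeats 4000000 in
theorem K3Gram_symm : ∀ i j, K3Gram i j = K3Gram j i :=
  @of_decide_eq_true _ (@Nat.decidableForallFin 22 _
    (fun _ => @Nat.decidableForallFin 22 _ (fun _ => Int.decEq _ _))) rfl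

set_option maxHeartbeats 16000000 in
theorem K3Gram_mul_inv : K3Gram * K3GramInv = 1 := by decide

theorem K3Gram_inv_mul : K3GramInv * K3Gram = 1 :=
  mul_eq_one_comm.mp K3Gram_mul_inv

section Bilinear
variable {R : Type*} [CommRing R]

theorem BK3_comm (x y : Fin 22 → R) : BK3 x y = BK3 y x := by
  rw [BK3, BK3, Finset.sum_comm]
  refine Finset.sum_congr rfl fun i _ => Finset.sum_congr rfl fun j _ => ?_
  rw [K3Gram_symm]; ring

theorem BK3_add_left (a b y : Fin 22 → R) :
    BK3 (fun i => a i + b i) y = BK3 a y + BK3 b y := by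
  simp only [BK3, add_mul, mul_add, Finset.sum_add_distrib]

theorem BK3_sub_left (a b y : Fin 22 → R) :
    BK3 (fun i => a i - b i) y = BK3 a y - BK3 b y := by
  simp only [BK3, mul_sub, sub_mul, Finset.sum_sub_distrib]

theorem BK3_smul_left (c : R) (a y : Fin 22 → R) :
    BK3 (fun i => c * a i) y = c * BK3 a y := by
  simp only [BK3, Finset.mul_sum]
  exact Finset.sum_congr rfl fun i _ => Finset.sum_congr rfl fun j _ => by ring

theorem BK3_add_right (x a b : Fin 22 → R) :
    BK3 x (fun i => a i + b i) = BK3 x a + BK3 x b := by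
  rw [BK3_comm, BK3_add_left, BK3_comm a x, BK3_comm b x]

theorem BK3_sub_right (x a b : Fin 22 → R) :
    BK3 x (fun i => a i - b i) = BK3 x a - BK3 x b := by
  rw [BK3_comm, BK3_sub_left, BK3_comm a x, BK3_comm b x]

theorem BK3_smul_right (c : R) (x a : Fin 22 → R) :
    BK3 x (fun i => c * a i) = c * BK3 x a := by
  rw [BK3_comm, BK3_smul_left, BK3_comm a x]

theorem BK3_eq_dot (x y : Fin 22 → R) :
    BK3 x y = x ⬝ᵥ ((K3Gram.map (Int.cast : ℤ → R)) *ᵥ y) := by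
  rw [BK3, dotProduct]
  refine Finset.sum_congr rfl fun i _ => ?_
  rw [mulVec, dotProduct, Finset.mul_sum]
  exact Finset.sum_congr rfl fun j _ => by simp [Matrix.map_apply]; ring

end Bilinear

theorem K3_inv_mul_map (R : Type*) [CommRing R] :
    (K3GramInv.map (Int.cast : ℤ → R)) * (K3Gram.map (Int.cast : ℤ → R)) = 1 := by
  have h := Matrix.map_mul (L := K3GramInv) (M := K3Gram) (f := Int.castRingHom R)
  rw [K3Gram_inv_mul] at h
  have h2 : (K3GramInv.map (Int.cast : ℤ → R)) * (K3Gram.map (Int.cast : ℤ → R))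
      = Matrix.map 1 ⇑(Int.castRingHom R) := h.symm
  rw [h2]
  ext i j
  by_cases hij : i = j <;> simp [Matrix.one_apply, hij]

theorem BK3_map {R S : Type*} [CommRing R] [CommRing S] (f : R →+* S) (x y : Fin 22 → R) :
    BK3 (fun i => f (x i)) (fun i => f (y i)) = f (BK3 x y) := by
  simp [BK3, map_sum, _root_.map_mul, map_intCast]

/-- Nondegeneracy of the K3 form over ℝ. -/
theorem BK3_nondeg (z : Fin 22 → ℝ) (hz : z ≠ 0) : ∃ v : Fin 22 → ℝ, BK3 v z ≠ 0 := by
  by_contra h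
  push_neg at h
  apply hz
  have hGz : (K3Gram.map (Int.cast : ℤ → ℝ)) *ᵥ z = 0 := by
    funext i
    have := h (Pi.single i 1)
    rw [BK3_eq_dot, single_dotProduct, one_mul] at this
    exact this
  have : (K3GramInv.map (Int.cast : ℤ → ℝ)) *ᵥ ((K3Gram.map (Int.cast : ℤ → ℝ)) *ᵥ z) = z := by
    rw [mulVec_mulVec, K3_inv_mul_map, one_mulVec]
  rw [hGz, mulVec_zero] at this
  exact this.symm

/-- For any nonzero integral vector `δ` there is a nonzero integral vector orthogonal to it. -/
theorem exists_perp_int (δ : Fin 22 → ℤ) (hδ : δ ≠ 0) :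
    ∃ δ₂ : Fin 22 → ℤ, δ₂ ≠ 0 ∧ BK3 δ δ₂ = 0 := by
  have hGδ : (K3Gram.map (Int.cast : ℤ → ℤ)) *ᵥ δ ≠ 0 := by
    intro hGz
    apply hδ
    have : (K3GramInv.map (Int.cast : ℤ → ℤ)) *ᵥ ((K3Gram.map (Int.cast : ℤ → ℤ)) *ᵥ δ) = δ := by
      rw [mulVec_mulVec, K3_inv_mul_map, one_mulVec]
    rw [hGz, mulVec_zero] at this
    exact this.symm
  obtain ⟨i, hi⟩ := Function.ne_iff.mp hGδ
  set w := (K3Gram.map (Int.cast : ℤ → ℤ)) *ᵥ δ with hw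
  have hcol : ∀ k, BK3 δ (Pi.single k (1:ℤ)) = w k := by
    intro k
    rw [BK3_comm, BK3_eq_dot, single_dotProduct, one_mul]
  have hj : ∃ j : Fin 22, j ≠ i := by
    by_cases h : i = 0
    · exact ⟨1, by rw [h]; decide⟩
    · exact ⟨0, fun hc => h hc.symm⟩
  obtain ⟨j, hji⟩ := hj
  refine ⟨fun k => w j * (Pi.single i (1:ℤ) : Fin 22 → ℤ) k
      - w i * (Pi.single j (1:ℤ) : Fin 22 → ℤ) k, ?_, ?_⟩
  · intro h0
    have h1 := congrFun h0 j
    simp only [Pi.single_apply, if_neg hji, if_pos rfl, Pi.zero_apply, mul_zero, mul_one,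
      zero_sub, neg_eq_zero, if_true, eq_self_iff_true] at h1
    exact hi (by simpa using h1)
  · rw [BK3_sub_right, BK3_smul_right, BK3_smul_right, hcol, hcol]
    ring

theorem BK3_zero_right {R : Type*} [CommRing R] (x : Fin 22 → R) :
    BK3 x (fun _ => (0:R)) = 0 := by simp [BK3]

theorem BK3_neg_right {R : Type*} [CommRing R] (x a : Fin 22 → R) :
    BK3 x (fun i => -(a i)) = -BK3 x a := by
  simp only [BK3, Finset.sum_neg_distrib, mul_neg, ← Finset.sum_neg_distrib]

theorem BK3_ofReal (p q : Fin 22 → ℝ) :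
    BK3 (fun i => ((p i : ℝ) : ℂ)) (fun i => ((q i : ℝ) : ℂ)) = ((BK3 p q : ℝ) : ℂ) := by
  simpa using BK3_map Complex.ofRealHom p q

theorem BK3_mulc_left {R : Type*} [CommRing R] (c : R) (a y : Fin 22 → R) :
    BK3 (fun i => a i * c) y = BK3 a y * c := by
  rw [show (fun i => a i * c) = fun i => c * a i from funext fun i => mul_comm _ _,
    BK3_smul_left, mul_comm]

theorem BK3_mulc_right {R : Type*} [CommRing R] (c : R) (x a : Fin 22 → R) :
    BK3 x (fun i => a i * c) = BK3 x a * c := by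
  rw [show (fun i => a i * c) = fun i => c * a i from funext fun i => mul_comm _ _,
    BK3_smul_right, mul_comm]

/-- Decomposition of the complex K3 form into real and imaginary parts. -/
theorem BK3_c (p p' q q' : Fin 22 → ℝ) :
    BK3 (fun i => (p i : ℂ) + (p' i : ℂ) * Complex.I)
        (fun i => (q i : ℂ) + (q' i : ℂ) * Complex.I)
      = ((BK3 p q - BK3 p' q' : ℝ) : ℂ)
        + ((BK3 p q' + BK3 p' q : ℝ) : ℂ) * Complex.I := by
  rw [BK3_add_left, BK3_add_right, BK3_add_right, BK3_mulc_left, BK3_mulc_left,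
    BK3_mulc_right, BK3_mulc_right, BK3_ofReal, BK3_ofReal, BK3_ofReal, BK3_ofReal]
  push_cast
  linear_combination ((BK3 p' q' : ℝ) : ℂ) * Complex.I_sq

theorem cplx_zero_iff (a b : ℝ) :
    ((a : ℂ) + (b : ℂ) * Complex.I = 0) ↔ a = 0 ∧ b = 0 := by
  constructor
  · intro h
    have hre := congrArg Complex.re h
    have him := congrArg Complex.im h
    simp at hre him
    exact ⟨hre, him⟩
  · rintro ⟨rfl, rfl⟩; simp

theorem re_form (a b : ℝ) : ((a : ℂ) + (b : ℂ) * Complex.I).re = a := by simp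

theorem conj_form (p p' : Fin 22 → ℝ) :
    (fun i => (starRingEnd ℂ) ((p i : ℂ) + (p' i : ℂ) * Complex.I))
      = fun i => ((p i : ℂ)) + ((-(p' i) : ℝ) : ℂ) * Complex.I := by
  funext i
  simp [Complex.ext_iff]

theorem BK3_comb3_left (a b c : ℝ) (v κ x y t : Fin 22 → ℝ) :
    BK3 (fun i => v i - (a * κ i + (b * x i + c * y i))) t
      = BK3 v t - (a * BK3 κ t + (b * BK3 x t + c * BK3 y t)) := by
  rw [BK3_sub_left, BK3_add_left, BK3_add_left, BK3_smul_left, BK3_smul_left, BK3_smul_left]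

theorem BK3_comb2_left (a t : ℝ) (x w v : Fin 22 → ℝ) :
    BK3 (fun i => a * x i + t * w i) v = a * BK3 x v + t * BK3 w v := by
  rw [BK3_add_left, BK3_smul_left, BK3_smul_left]

theorem BK3_comb2_right (a t : ℝ) (v x w : Fin 22 → ℝ) :
    BK3 v (fun i => a * x i + t * w i) = a * BK3 v x + t * BK3 v w := by
  rw [BK3_add_right, BK3_smul_right, BK3_smul_right]

/-- Projection away from a positive-definite orthogonal triple. -/
theorem exists_orth_vector (κ x y z : Fin 22 → ℝ)
    (hκκ : BK3 κ κ ≠ 0) (hxx : BK3 x x ≠ 0) (hyy : BK3 y y ≠ 0)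
    (hκx : BK3 κ x = 0) (hκy : BK3 κ y = 0) (hxy : BK3 x y = 0)
    (hzκ : BK3 z κ = 0) (hzx : BK3 z x = 0) (hzy : BK3 z y = 0) (hz : z ≠ 0) :
    ∃ w : Fin 22 → ℝ, BK3 w κ = 0 ∧ BK3 w x = 0 ∧ BK3 w y = 0 ∧ BK3 w z ≠ 0 := by
  obtain ⟨v, hv⟩ := BK3_nondeg z hz
  refine ⟨fun i => v i - (BK3 v κ / BK3 κ κ * κ i +
      (BK3 v x / BK3 x x * x i + BK3 v y / BK3 y y * y i)), ?_, ?_, ?_, ?_⟩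
  · rw [BK3_comb3_left, (BK3_comm x κ).trans hκx, (BK3_comm y κ).trans hκy,
      div_mul_cancel₀ _ hκκ]
    ring
  · rw [BK3_comb3_left, hκx, (BK3_comm y x).trans hxy, div_mul_cancel₀ _ hxx]
    ring
  · rw [BK3_comb3_left, hκy, hxy, div_mul_cancel₀ _ hyy]
    ring
  · rw [BK3_comb3_left, (BK3_comm κ z).trans hzκ, (BK3_comm x z).trans hzx,
      (BK3_comm y z).trans hzy]
    simpa using hv

/-- The cone over the `κ`-polarized period domain of K3 surfaces:
`{u ∈ ℂ²² : B(u,u) = 0, B(u,ū) > 0, B(u,κ) = 0}` (note `B(u,ū)` is always real). -/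
def DK3 (κ : Fin 22 → ℝ) : Set (Fin 22 → ℂ) :=
  {u | BK3 u u = 0 ∧
    0 < (BK3 u (fun i => (starRingEnd ℂ) (u i))).re ∧
    BK3 u (fun i => (κ i : ℂ)) = 0}

set_option maxHeartbeats 1000000 in
theorem dense_step (κ : Fin 22 → ℝ) (hκpos : 0 < BK3 κ κ)
    (hκnr : ∀ δ : Fin 22 → ℤ, δ ≠ 0 → BK3 κ (fun i => (δ i : ℝ)) ≠ 0)
    (δ : Fin 22 → ℤ) (hδ : δ ≠ 0) (u : Fin 22 → ℂ) (hu : u ∈ DK3 κ) :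
    ∃ g : ℕ → Fin 22 → ℂ,
      (∀ n, g n ∈ DK3 κ ∧ BK3 (g n) (fun i => (δ i : ℂ)) ≠ 0) ∧
      Filter.Tendsto g Filter.atTop (nhds u) := by
  by_cases hgen : BK3 u (fun i => (δ i : ℂ)) ≠ 0
  · exact ⟨fun _ => u, fun _ => ⟨hu, hgen⟩, tendsto_const_nhds⟩
  push_neg at hgen
  set x : Fin 22 → ℝ := fun i => (u i).re with hxdef
  set y : Fin 22 → ℝ := fun i => (u i).im with hydef
  set δℝ : Fin 22 → ℝ := fun i => ((δ i : ℤ) : ℝ) with hδℝdef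
  have hu_eq : u = fun i => (x i : ℂ) + (y i : ℂ) * Complex.I := by
    funext i; exact (Complex.re_add_im (u i)).symm
  have hconj2 : (fun i => (starRingEnd ℂ) (u i))
      = fun i => ((x i : ℂ)) + ((-(y i) : ℝ) : ℂ) * Complex.I := by
    funext i; simp [Complex.ext_iff, hxdef, hydef]
  have hκc : (fun i => ((κ i : ℝ) : ℂ))
      = fun i => ((κ i : ℝ) : ℂ) + (((0:ℝ) : ℝ) : ℂ) * Complex.I := by
    funext i; simp
  have hδc : (fun i => ((δ i : ℤ) : ℂ))
      = fun i => ((δℝ i : ℝ) : ℂ) + (((0:ℝ) : ℝ) : ℂ) * Complex.I := by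
    funext i; simp [hδℝdef]
  obtain ⟨h1, h2, h3⟩ := hu
  rw [hu_eq, BK3_c, cplx_zero_iff] at h1
  obtain ⟨hxx_yy, hxy2⟩ := h1
  have hxy : BK3 x y = 0 := by have h := BK3_comm y x; linarith
  rw [hconj2, hu_eq, BK3_c, re_form, BK3_neg_right, sub_neg_eq_add] at h2
  have hxx : 0 < BK3 x x := by linarith
  have hyy : 0 < BK3 y y := by linarith
  rw [hu_eq, hκc, BK3_c, cplx_zero_iff] at h3
  obtain ⟨hxκ', hyκ'⟩ := h3
  rw [BK3_zero_right, sub_zero] at hxκ'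
  rw [BK3_zero_right, zero_add] at hyκ'
  rw [hu_eq, hδc, BK3_c, cplx_zero_iff] at hgen
  obtain ⟨hxδ', hyδ'⟩ := hgen
  rw [BK3_zero_right, sub_zero] at hxδ'
  rw [BK3_zero_right, zero_add] at hyδ'
  -- the nonzero integral vector is not a multiple of κ
  have hδℝne : δℝ ≠ 0 := by
    intro h0
    apply hδ
    funext i
    have := congrFun h0 i
    simpa [hδℝdef] using this
  set r : ℝ := BK3 δℝ κ / BK3 κ κ with hrdef
  set δ' : Fin 22 → ℝ := fun i => δℝ i - r * κ i with hδ'def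
  have hδ'κ : BK3 δ' κ = 0 := by
    rw [hδ'def, BK3_sub_left, BK3_smul_left, hrdef, div_mul_cancel₀ _ hκpos.ne']
    ring
  have hδ'x : BK3 δ' x = 0 := by
    rw [hδ'def, BK3_sub_left, BK3_smul_left, (BK3_comm δℝ x).trans hxδ',
      (BK3_comm κ x).trans hxκ']
    ring
  have hδ'y : BK3 δ' y = 0 := by
    rw [hδ'def, BK3_sub_left, BK3_smul_left, (BK3_comm δℝ y).trans hyδ',
      (BK3_comm κ y).trans hyκ']
    ring
  have hδ'ne : δ' ≠ 0 := by
    intro h0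
    have hr : ∀ i, δℝ i = r * κ i := by
      intro i
      have := congrFun h0 i
      rw [hδ'def] at this
      simpa [sub_eq_zero] using this
    have hrne : r ≠ 0 := by
      rintro hr0
      apply hδℝne
      funext i
      rw [hr i, hr0, zero_mul]
      rfl
    obtain ⟨δ₂, hδ₂ne, hδ₂⟩ := exists_perp_int δ hδ
    apply hκnr δ₂ hδ₂ne
    have hκ_eq : κ = fun i => (1/r) * δℝ i := by
      funext i
      rw [hr i]
      field_simp
    rw [hκ_eq, BK3_smul_left]
    have hcast : BK3 δℝ (fun i => ((δ₂ i : ℤ) : ℝ)) = ((BK3 δ δ₂ : ℤ) : ℝ) := by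
      rw [hδℝdef]
      simpa using BK3_map (Int.castRingHom ℝ) δ δ₂
    rw [hcast, hδ₂]
    simp
  obtain ⟨w, hwκ, hwx, hwy, hwz⟩ := exists_orth_vector κ x y δ' hκpos.ne' hxx.ne' hyy.ne'
    ((BK3_comm κ x).trans hxκ') ((BK3_comm κ y).trans hyκ') hxy hδ'κ hδ'x hδ'y hδ'ne
  have hwδ : BK3 w δℝ ≠ 0 := by
    have hδℝ_eq : δℝ = fun i => δ' i + r * κ i := by
      funext i; rw [hδ'def]; ring
    rw [hδℝ_eq, BK3_add_right, BK3_smul_right, hwκ, mul_zero, add_zero]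
    exact hwz
  -- the perturbation family
  set c : ℝ := BK3 w w / BK3 x x with hcdef
  set s : ℝ := 1 / (1 + |c|) with hsdef
  have hs : 0 < s := by rw [hsdef]; positivity
  set tseq : ℕ → ℝ := fun n => s / (n + 1) with htdef
  have ht0 : ∀ n, 0 < tseq n := by intro n; rw [htdef]; positivity
  have hts : ∀ n, tseq n ≤ s := by
    intro n
    rw [htdef]
    exact div_le_self hs.le (by push_cast; linarith [Nat.cast_nonneg (α := ℝ) n])
  have hrad : ∀ n, 0 < 1 - c * tseq n ^ 2 := by
    intro n
    have hc0 := abs_nonneg c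
    have h2 : tseq n ^ 2 ≤ s ^ 2 := by nlinarith [ht0 n, hts n]
    have h1 : c * tseq n ^ 2 ≤ |c| * s ^ 2 := by
      nlinarith [le_abs_self c, sq_nonneg (tseq n), ht0 n, hts n]
    have h4 : (0:ℝ) < (1 + |c|) ^ 2 := by positivity
    have h3 : |c| * s ^ 2 < 1 := by
      rw [hsdef, div_pow, one_pow, mul_one_div, div_lt_one h4]
      nlinarith
    linarith
  set a : ℕ → ℝ := fun n => Real.sqrt (1 - c * tseq n ^ 2) with hadef
  have ha2 : ∀ n, a n ^ 2 = 1 - c * tseq n ^ 2 := fun n => Real.sq_sqrt (hrad n).le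
  have hcmul : c * BK3 x x = BK3 w w := div_mul_cancel₀ _ hxx.ne'
  have hxw : BK3 x w = 0 := (BK3_comm x w).trans hwx
  have hxtxt : ∀ n, BK3 (fun i => a n * x i + tseq n * w i)
      (fun i => a n * x i + tseq n * w i) = BK3 x x := by
    intro n
    rw [BK3_comb2_left, BK3_comb2_right, BK3_comb2_right, hxw, hwx]
    linear_combination BK3 x x * ha2 n - tseq n ^ 2 * hcmul
  have hxty : ∀ n, BK3 (fun i => a n * x i + tseq n * w i) y = 0 := by
    intro n
    rw [BK3_comb2_left, hxy, hwy]
    ring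
  have hxtκ : ∀ n, BK3 (fun i => a n * x i + tseq n * w i) κ = 0 := by
    intro n
    rw [BK3_comb2_left, hxκ', hwκ]
    ring
  have hxtδ : ∀ n, BK3 (fun i => a n * x i + tseq n * w i) δℝ = tseq n * BK3 w δℝ := by
    intro n
    rw [BK3_comb2_left, hxδ']
    ring
  refine ⟨fun n => fun i => ((a n * x i + tseq n * w i : ℝ) : ℂ) + ((y i : ℝ) : ℂ) * Complex.I,
    fun n => ⟨⟨?_, ?_, ?_⟩, ?_⟩, ?_⟩
  · rw [BK3_c, cplx_zero_iff]
    constructor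
    · rw [hxtxt n]; linarith
    · rw [hxty n, BK3_comm y _, hxty n]; ring
  · show 0 < (BK3 (fun i => ((a n * x i + tseq n * w i : ℝ) : ℂ) + ((y i : ℝ) : ℂ) * Complex.I)
      (fun i => (starRingEnd ℂ)
        (((a n * x i + tseq n * w i : ℝ) : ℂ) + ((y i : ℝ) : ℂ) * Complex.I))).re
    rw [conj_form, BK3_c, re_form, BK3_neg_right, sub_neg_eq_add, hxtxt n]
    linarith
  · rw [hκc, BK3_c, cplx_zero_iff]
    constructor
    · rw [BK3_zero_right, sub_zero]; exact hxtκ n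
    · rw [BK3_zero_right, zero_add]; exact hyκ'
  · rw [hδc, BK3_c]
    intro h0
    rw [cplx_zero_iff] at h0
    obtain ⟨ha0, -⟩ := h0
    rw [BK3_zero_right, sub_zero, hxtδ n] at ha0
    exact (mul_ne_zero (ht0 n).ne' hwδ) ha0
  · have htt : Filter.Tendsto tseq Filter.atTop (nhds 0) := by
      rw [htdef]
      exact Filter.Tendsto.div_atTop tendsto_const_nhds
        (Filter.tendsto_atTop_add_const_right _ 1 tendsto_natCast_atTop_atTop)
    have hta : Filter.Tendsto a Filter.atTop (nhds 1) := by
      have h1 : Filter.Tendsto (fun n => 1 - c * tseq n ^ 2) Filter.atTop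
          (nhds (1 - c * 0 ^ 2)) :=
        tendsto_const_nhds.sub (tendsto_const_nhds.mul (htt.pow 2))
      have h2 := (Real.continuous_sqrt.tendsto _).comp h1
      rw [hadef]
      simpa [Function.comp_def] using h2
    rw [tendsto_pi_nhds]
    intro i
    have h1 : Filter.Tendsto (fun n => a n * x i + tseq n * w i) Filter.atTop
        (nhds (1 * x i + 0 * w i)) :=
      (hta.mul tendsto_const_nhds).add (htt.mul tendsto_const_nhds)
    have h2 := ((Complex.continuous_ofReal.tendsto _).comp h1).add
      (tendsto_const_nhds (x := ((y i : ℝ) : ℂ) * Complex.I))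
    rw [hu_eq]
    simpa [Function.comp] using h2

theorem continuous_BK3_self : Continuous fun u : Fin 22 → ℂ => BK3 u u := by
  apply continuous_finset_sum
  intro i _
  apply continuous_finset_sum
  intro j _
  exact (continuous_const.mul (continuous_apply i)).mul (continuous_apply j)

theorem continuous_BK3_const (v : Fin 22 → ℂ) :
    Continuous fun u : Fin 22 → ℂ => BK3 u v := by
  apply continuous_finset_sum
  intro i _
  apply continuous_finset_sum
  intro j _
  exact (continuous_const.mul (continuous_apply i)).mul continuous_const

theorem continuous_BK3_conj :
    Continuous fun u : Fin 22 → ℂ => (BK3 u (fun i => (starRingEnd ℂ) (u i))).re := by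
  apply Complex.continuous_re.comp
  apply continuous_finset_sum
  intro i _
  apply continuous_finset_sum
  intro j _
  exact (continuous_const.mul (continuous_apply i)).mul
    (Complex.continuous_conj.comp (continuous_apply j))

theorem generic_periods_dense_K3 (κ : Fin 22 → ℝ)
    (hκpos : 0 < BK3 κ κ)
    (hκnr : ∀ δ : Fin 22 → ℤ, δ ≠ 0 → BK3 κ (fun i => (δ i : ℝ)) ≠ 0) :
    DK3 κ ⊆
      closure {u ∈ DK3 κ | ∀ δ : Fin 22 → ℤ, δ ≠ 0 →
        BK3 u (fun i => (δ i : ℂ)) ≠ 0} := by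
  classical
  have hCclosed : IsClosed {u : Fin 22 → ℂ |
      BK3 u u = 0 ∧ BK3 u (fun i => (κ i : ℂ)) = 0} := by
    rw [Set.setOf_and]
    exact (isClosed_eq continuous_BK3_self continuous_const).inter
      (isClosed_eq (continuous_BK3_const _) continuous_const)
  have hOopen : IsOpen {u : Fin 22 → ℂ |
      0 < (BK3 u (fun i => (starRingEnd ℂ) (u i))).re} :=
    isOpen_lt continuous_const continuous_BK3_conj
  have hLC : IsLocallyClosed (DK3 κ) := by
    refine ⟨_, _, hOopen, hCclosed, ?_⟩
    ext u
    simp only [DK3, Set.mem_setOf_eq, Set.mem_inter_iff]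
    tauto
  haveI : LocallyCompactSpace (DK3 κ) := hLC.locallyCompactSpace
  set f : {δ : Fin 22 → ℤ // δ ≠ 0} → Set (DK3 κ) := fun δ =>
    {p | BK3 (p : Fin 22 → ℂ) (fun i => ((δ : Fin 22 → ℤ) i : ℂ)) ≠ 0} with hfdef
  have hopen : ∀ δ, IsOpen (f δ) := by
    intro δ
    have : IsClosed {p : DK3 κ |
        BK3 (p : Fin 22 → ℂ) (fun i => ((δ : Fin 22 → ℤ) i : ℂ)) = 0} :=
      isClosed_eq ((continuous_BK3_const _).comp continuous_subtype_val) continuous_const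
    exact isOpen_compl_iff.mpr this
  have hdense : ∀ δ, Dense (f δ) := by
    rintro ⟨δ, hδ⟩ ⟨u, hu⟩
    obtain ⟨g, hg, hgt⟩ := dense_step κ hκpos hκnr δ hδ u hu
    have hgs : Filter.Tendsto (fun n => (⟨g n, (hg n).1⟩ : DK3 κ)) Filter.atTop
        (nhds ⟨u, hu⟩) := by
      rw [tendsto_subtype_rng]
      exact hgt
    exact mem_closure_of_tendsto hgs (Filter.Eventually.of_forall fun n => (hg n).2)
  have hD : Dense (⋂ δ, f δ) := dense_iInter_of_isOpen hopen hdense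
  intro u hu
  have h1 : (⟨u, hu⟩ : DK3 κ) ∈ closure (⋂ δ, f δ) := hD _
  rw [closure_subtype] at h1
  refine closure_mono ?_ h1
  rintro v ⟨p, hp, rfl⟩
  refine ⟨p.2, fun δ hδ => ?_⟩
  have := Set.mem_iInter.mp hp ⟨δ, hδ⟩
  exact this
end

section
/- Let B be the symmetric bilinear form on ℂ⁶ given by B(x,y) = x₁y₂ + x₂y₁ + x₃y₄ + x₄y₃ + x₅y₆ + x₆y₅, and let κ ∈ ℝ⁶ satisfy B(κ,κ) > 0. Define D_κ := {u ∈ ℂ⁶ : B(u,u) = 0, B(u,ū) > 0, B(u,κ) = 0}, which is invariant under the scaling action of ℂˣ on ℂ⁶ \ {0}. Then the quotient space D_κ/ℂˣ (with the quotient topology) has exactly two connected components, and each component is contractible. -/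
/-- The quotient of the cone `D_κ` by the scaling action of `ℂˣ`, with the
quotient topology. -/
def PeriodDomainTorus (κ : Fin 6 → ℝ) : Type :=
  Quot (fun u v : Dtorus κ => ∃ c : ℂˣ, (v : Fin 6 → ℂ) = (c : ℂ) • (u : Fin 6 → ℂ))

noncomputable instance (κ : Fin 6 → ℝ) : TopologicalSpace (PeriodDomainTorus κ) :=
  instTopologicalSpaceQuot

open Set Topology


theorem connectedComponent_inl {A B : Type*} [TopologicalSpace A] [TopologicalSpace B]
    [ConnectedSpace A] (a : A) :
    connectedComponent (Sum.inl a : A ⊕ B) = range Sum.inl := by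
  apply subset_antisymm
  · exact isClopen_range_inl.connectedComponent_subset ⟨a, rfl⟩
  · have := (continuous_inl : Continuous (Sum.inl : A → A ⊕ B)).image_connectedComponent_subset a
    rwa [PreconnectedSpace.connectedComponent_eq_univ, image_univ] at this

theorem connectedComponent_inr {A B : Type*} [TopologicalSpace A] [TopologicalSpace B]
    [ConnectedSpace B] (b : B) :
    connectedComponent (Sum.inr b : A ⊕ B) = range Sum.inr := by
  apply subset_antisymm
  · exact isClopen_range_inr.connectedComponent_subset ⟨b, rfl⟩
  · have := (continuous_inr : Continuous (Sum.inr : B → A ⊕ B)).image_connectedComponent_subset b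
    rwa [PreconnectedSpace.connectedComponent_eq_univ, image_univ] at this

theorem homeo_image_connectedComponent {X Y : Type*} [TopologicalSpace X] [TopologicalSpace Y]
    (h : X ≃ₜ Y) (x : X) : h '' connectedComponent x = connectedComponent (h x) := by
  apply subset_antisymm
  · exact h.continuous.image_connectedComponent_subset x
  · intro y hy
    have := h.symm.continuous.image_connectedComponent_subset (h x)
    rw [h.symm_apply_apply] at this
    exact ⟨h.symm y, this ⟨y, hy, rfl⟩, h.apply_symm_apply y⟩

theorem main_of_homeo {X A B : Type*} [TopologicalSpace X] [TopologicalSpace A]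
    [TopologicalSpace B] [ConnectedSpace A] [ConnectedSpace B]
    [ContractibleSpace A] [ContractibleSpace B] (h : X ≃ₜ A ⊕ B) :
    Nat.card (ConnectedComponents X) = 2 ∧
      ∀ x : X, ContractibleSpace (connectedComponent x) := by
  constructor
  · have hf : Continuous (Sum.elim (fun _ : A => false) (fun _ : B => true) ∘ h) :=
      (continuous_sumElim.mpr ⟨continuous_const, continuous_const⟩).comp h.continuous
    have E : ConnectedComponents X ≃ Bool := by
      refine Equiv.ofBijective hf.connectedComponentsLift ⟨?_, ?_⟩
      · have key : ∀ x y : X,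
            hf.connectedComponentsLift x = hf.connectedComponentsLift y →
            (x : ConnectedComponents X) = y := by
          intro x y hxy
          rw [hf.connectedComponentsLift_apply_coe, hf.connectedComponentsLift_apply_coe] at hxy
          rw [ConnectedComponents.coe_eq_coe]
          have key : connectedComponent (h x) = connectedComponent (h y) := by
            rcases hx : h x with a | b <;> rcases hy : h y with a' | b' <;>
              simp [hx, hy, Function.comp] at hxy ⊢
            · rw [connectedComponent_inl, connectedComponent_inl]
            · rw [connectedComponent_inr, connectedComponent_inr]
          have h2 : h '' connectedComponent x = h '' connectedComponent y := by
            rw [homeo_image_connectedComponent, homeo_image_connectedComponent, key]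
          have h3 := congrArg (fun s => h.symm '' s) h2
          simpa [image_image] using h3
        intro x y hxy
        obtain ⟨x', rfl⟩ := ConnectedComponents.surjective_coe x
        obtain ⟨y', rfl⟩ := ConnectedComponents.surjective_coe y
        exact key x' y' hxy
      · intro b
        cases b
        · obtain ⟨a⟩ := (inferInstance : Nonempty A)
          refine ⟨(h.symm (Sum.inl a) : X), ?_⟩
          rw [hf.connectedComponentsLift_apply_coe]; simp
        · obtain ⟨b⟩ := (inferInstance : Nonempty B)
          refine ⟨(h.symm (Sum.inr b) : X), ?_⟩
          rw [hf.connectedComponentsLift_apply_coe]; simp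
    rw [Nat.card_eq_of_equiv_fin (E.trans finTwoEquiv.symm)]
  · intro x
    have e1 : connectedComponent x ≃ₜ (connectedComponent (h x) : Set (A ⊕ B)) :=
      (h.image (connectedComponent x)).trans
        (Homeomorph.setCongr (homeo_image_connectedComponent h x))
    rcases hx : h x with a | b
    · rw [hx, connectedComponent_inl] at e1
      have e2 : (range (Sum.inl : A → A ⊕ B)) ≃ₜ A :=
        IsEmbedding.inl.toHomeomorph.symm
      exact (e1.trans e2).contractibleSpace
    · rw [hx, connectedComponent_inr] at e1
      have e2 : (range (Sum.inr : B → A ⊕ B)) ≃ₜ B :=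
        IsEmbedding.inr.toHomeomorph.symm
      exact (e1.trans e2).contractibleSpace

open Complex

noncomputable section
def qq (m : Fin 3 → ℂ) : ℂ := m 0 ^ 2 + m 1 ^ 2 + m 2 ^ 2
def nn (m : Fin 3 → ℂ) : ℝ := normSq (m 0) + normSq (m 1) + normSq (m 2)

def zc (u : Fin 6 → ℂ) : ℂ := u 2 + u 3 + Complex.I * (u 4 + u 5)
def wc (u : Fin 6 → ℂ) : ℂ := u 2 + u 3 - Complex.I * (u 4 + u 5)
def nvec (u : Fin 6 → ℂ) : Fin 3 → ℂ := ![u 2 - u 3, u 4 - u 5, 2 * u 0]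

def sneg (m : Fin 3 → ℂ) : Fin 6 → ℂ :=
  ![2 * m 2, -(2 * m 2), qq m + 1 + 2 * m 0, qq m + 1 - 2 * m 0,
    -Complex.I * (qq m - 1) + 2 * m 1, -Complex.I * (qq m - 1) - 2 * m 1]

theorem sneg5 (m : Fin 3 → ℂ) : sneg m 5 = -Complex.I * (qq m - 1) - 2 * m 1 := rfl
theorem sneg4 (m : Fin 3 → ℂ) : sneg m 4 = -Complex.I * (qq m - 1) + 2 * m 1 := rfl
theorem sneg0 (m : Fin 3 → ℂ) : sneg m 0 = 2 * m 2 := rfl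
theorem sneg1 (m : Fin 3 → ℂ) : sneg m 1 = -(2 * m 2) := rfl
theorem sneg2 (m : Fin 3 → ℂ) : sneg m 2 = qq m + 1 + 2 * m 0 := rfl
theorem sneg3 (m : Fin 3 → ℂ) : sneg m 3 = qq m + 1 - 2 * m 0 := rfl

theorem wc_sneg (m : Fin 3 → ℂ) : wc (sneg m) = 4 := by
  simp only [wc, sneg0, sneg1, sneg2, sneg3, sneg4, sneg5]
  linear_combination (2*(qq m - 1)) * Complex.I_sq

theorem zc_sneg (m : Fin 3 → ℂ) : zc (sneg m) = 4 * qq m := by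
  simp only [zc, sneg0, sneg1, sneg2, sneg3, sneg4, sneg5]
  linear_combination (-2*(qq m - 1)) * Complex.I_sq

theorem nvec_sneg (m : Fin 3 → ℂ) : nvec (sneg m) = fun j => 4 * m j := by
  funext j
  fin_cases j <;>
    simp [nvec, sneg0, sneg1, sneg2, sneg3, sneg4, sneg5] <;> ring

theorem Btorus_sneg (m : Fin 3 → ℂ) : Btorus (sneg m) (sneg m) = 0 := by
  simp only [Btorus, qq, sneg0, sneg1, sneg2, sneg3, sneg4, sneg5]
  linear_combination (2 * ((m 0^2 + m 1^2 + m 2^2) - 1)^2) * Complex.I_sq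
end

section ids
variable (u : Fin 6 → ℂ)

theorem Id1 (h : u 1 = -u 0) : zc u * wc u - qq (nvec u) = 2 * Btorus u u := by
  simp only [zc, wc, qq, nvec, Btorus, h, Matrix.cons_val_zero, Matrix.cons_val_one,
    Matrix.head_cons, Matrix.cons_val_two, Matrix.tail_cons]
  linear_combination (-(u 4 + u 5)^2) * Complex.I_sq

theorem Id2 (h : u 1 = -u 0) :
    normSq (zc u) + normSq (wc u) - 2 * nn (nvec u)
      = 4 * (Btorus u (fun i => (starRingEnd ℂ) (u i))).re := by
  simp only [zc, wc, nn, nvec, Btorus, h, Matrix.cons_val_zero, Matrix.cons_val_one,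
    Matrix.head_cons, Matrix.cons_val_two, Matrix.tail_cons, Complex.normSq_apply,
    Complex.add_re, Complex.add_im, Complex.mul_re, Complex.mul_im, Complex.sub_re,
    Complex.sub_im, Complex.neg_re, Complex.neg_im, Complex.I_re, Complex.I_im,
    Complex.conj_re, Complex.conj_im, Complex.re_ofNat, Complex.im_ofNat]
  ring
end ids

def OmegaSet : Set (Fin 3 → ℂ) := {m | 2 * nn m < 1 + normSq (qq m) ∧ normSq (qq m) < 1}

theorem omega_zero_mem : (0 : Fin 3 → ℂ) ∈ OmegaSet := by
  constructor <;> simp [nn, qq]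

theorem nn_nonneg (m : Fin 3 → ℂ) : 0 ≤ nn m := by
  have := normSq_nonneg (m 0); have := normSq_nonneg (m 1); have := normSq_nonneg (m 2)
  unfold nn; linarith

theorem qq_smul (b : ℝ) (m : Fin 3 → ℂ) : qq (b • m) = (b : ℂ)^2 * qq m := by
  simp only [qq, Pi.smul_apply, Complex.real_smul]; ring

theorem nn_smul (b : ℝ) (m : Fin 3 → ℂ) : nn (b • m) = b^2 * nn m := by
  simp only [nn, Pi.smul_apply, Complex.real_smul, normSq_mul, Complex.normSq_ofReal]; ring

theorem omega_starConvex : StarConvex ℝ (0 : Fin 3 → ℂ) OmegaSet := by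
  intro y hy a b ha hb hab
  obtain ⟨h1, h2⟩ := hy
  have hb1 : b ≤ 1 := by linarith
  rw [smul_zero, zero_add]
  have hN := nn_nonneg y
  have hC := normSq_nonneg (qq y)
  have hnsq : normSq ((b:ℂ)^2) = b^4 := by
    rw [← Complex.ofReal_pow, Complex.normSq_ofReal]; ring
  have hs1 : b^2 ≤ 1 := by nlinarith
  have hsC : b^2 * normSq (qq y) ≤ 1 := by nlinarith
  have key : 0 ≤ (1 - b^2) * (1 - b^2 * normSq (qq y)) :=
    mul_nonneg (by linarith) (by linarith)
  constructor
  · show 2 * nn (b • y) < 1 + normSq (qq (b • y))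
    rw [nn_smul, qq_smul, normSq_mul, hnsq]
    by_cases hb0 : b = 0
    · subst hb0; nlinarith
    · have hbpos : 0 < b^2 := by positivity
      have h3 : 2 * (b^2 * nn y) < b^2 * (1 + normSq (qq y)) := by nlinarith
      have h4 : b^2 * (1 + normSq (qq y)) ≤ 1 + b^4 * normSq (qq y) := by nlinarith [key]
      linarith
  · show normSq (qq (b • y)) < 1
    rw [qq_smul, normSq_mul, hnsq]
    have hb4 : b^4 ≤ 1 := by nlinarith
    have := mul_le_of_le_one_left hC hb4
    linarith

instance : ContractibleSpace OmegaSet :=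
  omega_starConvex.contractibleSpace ⟨0, omega_zero_mem⟩

def kzero : Fin 6 → ℝ := ![1, 1, 0, 0, 0, 0]

theorem mem_Dzero_iff (u : Fin 6 → ℂ) :
    u ∈ Dtorus kzero ↔ Btorus u u = 0 ∧
      0 < (Btorus u (fun i => (starRingEnd ℂ) (u i))).re ∧ u 1 = -u 0 := by
  have k0 : kzero 0 = 1 := rfl
  have k1 : kzero 1 = 1 := rfl
  have k2 : kzero 2 = 0 := rfl
  have k3 : kzero 3 = 0 := rfl
  have k4 : kzero 4 = 0 := rfl
  have k5 : kzero 5 = 0 := rfl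
  have : Btorus u (fun i => ((kzero i : ℝ) : ℂ)) = u 0 + u 1 := by
    simp [Btorus, k0, k1, k2, k3, k4, k5]
  rw [Dtorus, Set.mem_setOf_eq, this]
  constructor
  · rintro ⟨h1, h2, h3⟩; exact ⟨h1, h2, by linear_combination h3⟩
  · rintro ⟨h1, h2, h3⟩; exact ⟨h1, h2, by linear_combination h3⟩

/-- the quotient chart map (before quotient): `u ↦ n(u)/w(u)` -/
noncomputable def gneg (u : Fin 6 → ℂ) : Fin 3 → ℂ := fun j => nvec u j / wc u

theorem normSq_four : normSq (4 : ℂ) = 16 := by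
  norm_num [Complex.normSq_apply]

theorem sneg_mem {m : Fin 3 → ℂ} (hm : m ∈ OmegaSet) :
    sneg m ∈ Dtorus kzero ∧ normSq (zc (sneg m)) < normSq (wc (sneg m)) := by
  obtain ⟨h1, h2⟩ := hm
  have hu1 : sneg m 1 = -sneg m 0 := by rw [sneg0, sneg1]
  have hzw : normSq (zc (sneg m)) < normSq (wc (sneg m)) := by
    rw [zc_sneg, wc_sneg, normSq_mul, normSq_four]
    nlinarith [normSq_nonneg (qq m)]
  refine ⟨(mem_Dzero_iff _).2 ⟨Btorus_sneg m, ?_, hu1⟩, hzw⟩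
  have hid := Id2 (sneg m) hu1
  rw [zc_sneg, wc_sneg, nvec_sneg] at hid
  have hnn : nn (fun j => 4 * m j) = 16 * nn m := by
    simp only [nn, normSq_mul, normSq_four]; ring
  rw [hnn, normSq_mul, normSq_four] at hid
  linarith

theorem wc_ne_zero {u : Fin 6 → ℂ} (hlt : normSq (zc u) < normSq (wc u)) : wc u ≠ 0 := by
  intro h
  rw [h, normSq_zero] at hlt
  exact absurd hlt (not_lt.2 (normSq_nonneg _))

theorem qq_gneg {u : Fin 6 → ℂ} (hu : u ∈ Dtorus kzero)
    (hlt : normSq (zc u) < normSq (wc u)) : qq (gneg u) = zc u / wc u := by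
  obtain ⟨h1, h2, h3⟩ := (mem_Dzero_iff u).1 hu
  have hw := wc_ne_zero hlt
  have hq : qq (nvec u) = zc u * wc u := by
    have := Id1 u h3; rw [h1] at this; linear_combination -this
  have : qq (gneg u) = qq (nvec u) / (wc u)^2 := by
    simp only [qq, gneg, div_pow]; ring
  rw [this, hq]; field_simp

theorem gneg_mem {u : Fin 6 → ℂ} (hu : u ∈ Dtorus kzero)
    (hlt : normSq (zc u) < normSq (wc u)) : gneg u ∈ OmegaSet := by
  obtain ⟨h1, h2, h3⟩ := (mem_Dzero_iff u).1 hu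
  have hw := wc_ne_zero hlt
  have hwpos : 0 < normSq (wc u) := by
    have := normSq_nonneg (zc u); linarith
  have hq : normSq (qq (gneg u)) = normSq (zc u) / normSq (wc u) := by
    rw [qq_gneg hu hlt, normSq_div]
  have hnn : nn (gneg u) = nn (nvec u) / normSq (wc u) := by
    simp only [nn, gneg, normSq_div]; ring
  have hid := Id2 u h3
  constructor
  · show 2 * nn (gneg u) < 1 + normSq (qq (gneg u))
    rw [hnn, hq]
    have hlt2 : 2 * nn (nvec u) < normSq (wc u) + normSq (zc u) := by linarith
    calc 2 * (nn (nvec u) / normSq (wc u)) = (2 * nn (nvec u)) / normSq (wc u) := by ring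
      _ < (normSq (wc u) + normSq (zc u)) / normSq (wc u) :=
          (div_lt_div_iff_of_pos_right hwpos).2 hlt2
      _ = 1 + normSq (zc u) / normSq (wc u) := by field_simp
  · show normSq (qq (gneg u)) < 1
    rw [hq, div_lt_one hwpos]; exact hlt

theorem zw_sum (u : Fin 6 → ℂ) : zc u + wc u = 2 * (u 2 + u 3) := by rw [zc, wc]; ring
theorem zw_diff (u : Fin 6 → ℂ) : zc u - wc u = 2 * Complex.I * (u 4 + u 5) := by
  rw [zc, wc]; ring

theorem sneg_gneg {u : Fin 6 → ℂ} (hu : u ∈ Dtorus kzero)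
    (hlt : normSq (zc u) < normSq (wc u)) :
    (wc u / 4) • sneg (gneg u) = u := by
  obtain ⟨h1, h2, h3⟩ := (mem_Dzero_iff u).1 hu
  have hw := wc_ne_zero hlt
  have hqg : qq (gneg u) = zc u / wc u := qq_gneg hu hlt
  have hs := zw_sum u
  have hd := zw_diff u
  have e0 : (wc u / 4) * sneg (gneg u) 0 = u 0 := by
    simp only [sneg0, gneg, nvec, Matrix.cons_val_two, Matrix.tail_cons, Matrix.head_cons,
      Fin.isValue]
    field_simp; ring
  have e1 : (wc u / 4) * sneg (gneg u) 1 = u 1 := by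
    simp only [sneg1, gneg, nvec, Matrix.cons_val_two, Matrix.tail_cons, Matrix.head_cons,
      Fin.isValue]
    rw [h3]; field_simp; ring
  have e2 : (wc u / 4) * sneg (gneg u) 2 = u 2 := by
    simp only [sneg2, hqg, gneg, nvec, Matrix.cons_val_zero, Fin.isValue]
    field_simp
    linear_combination hs
  have e3 : (wc u / 4) * sneg (gneg u) 3 = u 3 := by
    simp only [sneg3, hqg, gneg, nvec, Matrix.cons_val_zero, Fin.isValue]
    field_simp
    linear_combination hs
  have e4 : (wc u / 4) * sneg (gneg u) 4 = u 4 := by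
    simp only [sneg4, hqg, gneg, nvec, Matrix.cons_val_one, Matrix.head_cons, Matrix.cons_val_zero, Fin.isValue]
    field_simp
    linear_combination (-Complex.I) * hd + (-2 * (u 4 + u 5)) * Complex.I_sq
  have e5 : (wc u / 4) * sneg (gneg u) 5 = u 5 := by
    simp only [sneg5, hqg, gneg, nvec, Matrix.cons_val_one, Matrix.head_cons, Matrix.cons_val_zero, Fin.isValue]
    field_simp
    linear_combination (-Complex.I) * hd + (-2 * (u 4 + u 5)) * Complex.I_sq
  funext i
  fin_cases i
  · exact e0
  · exact e1
  · exact e2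
  · exact e3
  · exact e4
  · exact e5

def Jmap (u : Fin 6 → ℂ) : Fin 6 → ℂ := ![u 0, u 1, u 2, u 3, -u 4, -u 5]

theorem Jmap0 (u : Fin 6 → ℂ) : Jmap u 0 = u 0 := rfl
theorem Jmap1 (u : Fin 6 → ℂ) : Jmap u 1 = u 1 := rfl
theorem Jmap2 (u : Fin 6 → ℂ) : Jmap u 2 = u 2 := rfl
theorem Jmap3 (u : Fin 6 → ℂ) : Jmap u 3 = u 3 := rfl
theorem Jmap4 (u : Fin 6 → ℂ) : Jmap u 4 = -u 4 := rfl
theorem Jmap5 (u : Fin 6 → ℂ) : Jmap u 5 = -u 5 := rfl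

theorem Jmap_invol (u : Fin 6 → ℂ) : Jmap (Jmap u) = u := by
  have e0 : Jmap (Jmap u) 0 = u 0 := rfl
  have e1 : Jmap (Jmap u) 1 = u 1 := rfl
  have e2 : Jmap (Jmap u) 2 = u 2 := rfl
  have e3 : Jmap (Jmap u) 3 = u 3 := rfl
  have e4 : Jmap (Jmap u) 4 = u 4 := by rw [Jmap4, Jmap4, neg_neg]
  have e5 : Jmap (Jmap u) 5 = u 5 := by rw [Jmap5, Jmap5, neg_neg]
  funext i; fin_cases i
  · exact e0
  · exact e1
  · exact e2
  · exact e3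
  · exact e4
  · exact e5

theorem zc_Jmap (u : Fin 6 → ℂ) : zc (Jmap u) = wc u := by
  rw [zc, wc, Jmap2, Jmap3, Jmap4, Jmap5]; ring

theorem wc_Jmap (u : Fin 6 → ℂ) : wc (Jmap u) = zc u := by
  rw [wc, zc, Jmap2, Jmap3, Jmap4, Jmap5]; ring

theorem Jmap_smul (c : ℂ) (u : Fin 6 → ℂ) : Jmap (c • u) = c • Jmap u := by
  have e4 : Jmap (c • u) 4 = (c • Jmap u) 4 := by
    simp only [Jmap4, Pi.smul_apply, smul_eq_mul, Jmap4]; ring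
  have e5 : Jmap (c • u) 5 = (c • Jmap u) 5 := by
    simp only [Jmap5, Pi.smul_apply, smul_eq_mul, Jmap5]; ring
  funext i; fin_cases i
  · rfl
  · rfl
  · rfl
  · rfl
  · exact e4
  · exact e5
theorem Jmap_mem {u : Fin 6 → ℂ} (hu : u ∈ Dtorus kzero) : Jmap u ∈ Dtorus kzero := by
  rw [mem_Dzero_iff] at hu ⊢
  obtain ⟨h1, h2, h3⟩ := hu
  refine ⟨?_, ?_, by rw [Jmap0, Jmap1]; exact h3⟩
  · rw [Btorus] at h1 ⊢
    rw [Jmap0, Jmap1, Jmap2, Jmap3, Jmap4, Jmap5]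
    linear_combination h1
  · have : (Btorus (Jmap u) fun i => (starRingEnd ℂ) (Jmap u i))
        = Btorus u fun i => (starRingEnd ℂ) (u i) := by
      rw [Btorus, Btorus]
      simp only [Jmap0, Jmap1, Jmap2, Jmap3, Jmap4, Jmap5, map_neg]
      ring
    rw [this]; exact h2

theorem Jmap_continuous : Continuous Jmap := by
  apply continuous_pi
  intro i
  fin_cases i
  · exact continuous_apply (0 : Fin 6)
  · exact continuous_apply (1 : Fin 6)
  · exact continuous_apply (2 : Fin 6)
  · exact continuous_apply (3 : Fin 6)
  · exact (continuous_apply (4 : Fin 6)).neg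
  · exact (continuous_apply (5 : Fin 6)).neg

theorem zc_continuous : Continuous zc := by unfold zc; fun_prop
theorem wc_continuous : Continuous wc := by unfold wc; fun_prop

theorem nvec_continuous (j : Fin 3) : Continuous fun u => nvec u j := by
  fin_cases j
  · exact ((continuous_apply (2 : Fin 6)).sub (continuous_apply (3 : Fin 6)))
  · exact ((continuous_apply (4 : Fin 6)).sub (continuous_apply (5 : Fin 6)))
  · exact (continuous_const.mul (continuous_apply (0 : Fin 6)))

theorem sneg_continuous : Continuous sneg := by
  have hq : Continuous qq := by unfold qq; fun_prop
  apply continuous_pi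
  intro i
  fin_cases i
  · exact continuous_const.mul (continuous_apply (2 : Fin 3))
  · exact (continuous_const.mul (continuous_apply (2 : Fin 3))).neg
  · exact ((hq.add continuous_const).add (continuous_const.mul (continuous_apply (0 : Fin 3))))
  · exact ((hq.add continuous_const).sub (continuous_const.mul (continuous_apply (0 : Fin 3))))
  · exact ((continuous_const.mul (hq.sub continuous_const)).add
      (continuous_const.mul (continuous_apply (1 : Fin 3))))
  · exact ((continuous_const.mul (hq.sub continuous_const)).sub
      (continuous_const.mul (continuous_apply (1 : Fin 3))))

theorem abs_qq_le_nn (m : Fin 3 → ℂ) : ‖qq m‖ ≤ nn m := by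
  have h1 : ‖qq m‖ ≤
      ‖m 0 ^ 2‖ + ‖m 1 ^ 2‖ + ‖m 2 ^ 2‖ := by
    refine le_trans (norm_add_le _ _) ?_
    have := norm_add_le (m 0 ^ 2) (m 1 ^ 2)
    linarith
  have e : ∀ z : ℂ, ‖z ^ 2‖ = normSq z := by
    intro z; rw [norm_pow, Complex.sq_norm]
  rw [e, e, e] at h1
  exact h1

theorem nsz_ne_nsw {u : Fin 6 → ℂ} (hu : u ∈ Dtorus kzero) :
    normSq (zc u) ≠ normSq (wc u) := by
  intro heq
  obtain ⟨h1, h2, h3⟩ := (mem_Dzero_iff u).1 hu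
  have hq : qq (nvec u) = zc u * wc u := by
    have := Id1 u h3; rw [h1] at this; linear_combination -this
  have hid := Id2 u h3
  have hnn : nn (nvec u) < normSq (zc u) := by rw [heq] at hid ⊢; linarith
  have habs : ‖qq (nvec u)‖ = normSq (zc u) := by
    rw [hq, norm_mul]
    have habs2 : ‖wc u‖ = ‖zc u‖ := by
      rw [Complex.norm_def, Complex.norm_def, heq]
    rw [habs2, ← Complex.sq_norm (zc u)]; ring
  have := abs_qq_le_nn (nvec u)
  rw [habs] at this
  linarith

theorem gneg_sneg {m : Fin 3 → ℂ} : gneg (sneg m) = m := by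
  funext j
  rw [gneg, nvec_sneg, wc_sneg]
  field_simp

theorem zc_smul (c : ℂ) (u : Fin 6 → ℂ) : zc (c • u) = c * zc u := by
  simp only [zc, Pi.smul_apply, smul_eq_mul]; ring

theorem wc_smul (c : ℂ) (u : Fin 6 → ℂ) : wc (c • u) = c * wc u := by
  simp only [wc, Pi.smul_apply, smul_eq_mul]; ring

theorem nvec_smul (c : ℂ) (u : Fin 6 → ℂ) (j : Fin 3) : nvec (c • u) j = c * nvec u j := by
  have e0 : nvec (c • u) 0 = c * nvec u 0 := by
    simp only [nvec, Matrix.cons_val_zero, Pi.smul_apply, smul_eq_mul]; ring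
  have e1 : nvec (c • u) 1 = c * nvec u 1 := by
    simp only [nvec, Matrix.cons_val_one, Matrix.head_cons, Matrix.cons_val_zero, Pi.smul_apply, smul_eq_mul]; ring
  have e2 : nvec (c • u) 2 = c * nvec u 2 := by
    simp only [nvec, Matrix.cons_val_two, Matrix.tail_cons, Matrix.head_cons,
      Pi.smul_apply, smul_eq_mul]; ring
  fin_cases j
  · exact e0
  · exact e1
  · exact e2

theorem gneg_smul {c : ℂ} (hc : c ≠ 0) {u : Fin 6 → ℂ} (hw : wc u ≠ 0) :
    gneg (c • u) = gneg u := by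
  funext j
  rw [gneg, gneg, nvec_smul, wc_smul]
  field_simp

/-- scaling preserves membership in the cone -/
theorem smul_mem_Dtorus {κ : Fin 6 → ℝ} {u : Fin 6 → ℂ} (hu : u ∈ Dtorus κ) (c : ℂˣ) :
    (c : ℂ) • u ∈ Dtorus κ := by
  obtain ⟨h1, h2, h3⟩ := hu
  have hB1 : Btorus ((c:ℂ) • u) ((c:ℂ) • u) = (c:ℂ)^2 * Btorus u u := by
    simp only [Btorus, Pi.smul_apply, smul_eq_mul]; ring
  have hB3 : Btorus ((c:ℂ) • u) (fun i => ((κ i : ℝ) : ℂ)) =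
      (c:ℂ) * Btorus u (fun i => ((κ i : ℝ) : ℂ)) := by
    simp only [Btorus, Pi.smul_apply, smul_eq_mul]; ring
  have hB2 : Btorus ((c:ℂ) • u) (fun i => (starRingEnd ℂ) (((c:ℂ) • u) i)) =
      ((c:ℂ) * (starRingEnd ℂ) (c:ℂ)) * Btorus u (fun i => (starRingEnd ℂ) (u i)) := by
    simp only [Btorus, Pi.smul_apply, smul_eq_mul, map_mul]; ring
  refine ⟨by rw [hB1, h1, mul_zero], ?_, by rw [hB3, h3, mul_zero]⟩
  rw [hB2]
  have : (c:ℂ) * (starRingEnd ℂ) (c:ℂ) = (normSq (c:ℂ) : ℝ) := by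
    rw [Complex.mul_conj]
  rw [this, Complex.re_ofReal_mul]
  have hc : 0 < normSq (c:ℂ) := normSq_pos.2 (Units.ne_zero c)
  exact mul_pos hc h2

theorem normSq_zc_smul (c : ℂ) (u : Fin 6 → ℂ) :
    normSq (zc (c • u)) = normSq c * normSq (zc u) := by rw [zc_smul, normSq_mul]

theorem normSq_wc_smul (c : ℂ) (u : Fin 6 → ℂ) :
    normSq (wc (c • u)) = normSq c * normSq (wc u) := by rw [wc_smul, normSq_mul]

namespace PDhomeo

abbrev D0 := Dtorus kzero

noncomputable def psitilde (u : D0) : OmegaSet ⊕ OmegaSet :=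
  if h : normSq (zc u.val) < normSq (wc u.val)
  then Sum.inl ⟨gneg u.val, gneg_mem u.2 h⟩
  else Sum.inr ⟨gneg (Jmap u.val), gneg_mem (Jmap_mem u.2) (by
    rw [zc_Jmap, wc_Jmap]
    exact lt_of_le_of_ne (not_lt.1 h) (Ne.symm (nsz_ne_nsw u.2)))⟩

noncomputable def phitilde (x : OmegaSet ⊕ OmegaSet) : D0 :=
  Sum.elim (fun m => ⟨sneg m.val, (sneg_mem m.2).1⟩)
    (fun m => ⟨Jmap (sneg m.val), Jmap_mem (sneg_mem m.2).1⟩) x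

theorem psitilde_resp (u v : D0)
    (h : ∃ c : ℂˣ, (v : Fin 6 → ℂ) = (c : ℂ) • (u : Fin 6 → ℂ)) :
    psitilde u = psitilde v := by
  obtain ⟨c, hc⟩ := h
  have hcpos : 0 < normSq (c:ℂ) := normSq_pos.2 (Units.ne_zero c)
  have hzv : normSq (zc v.val) = normSq (c:ℂ) * normSq (zc u.val) := by
    rw [hc, normSq_zc_smul]
  have hwv : normSq (wc v.val) = normSq (c:ℂ) * normSq (wc u.val) := by
    rw [hc, normSq_wc_smul]
  have hiff : (normSq (zc v.val) < normSq (wc v.val)) ↔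
      (normSq (zc u.val) < normSq (wc u.val)) := by
    rw [hzv, hwv]; exact mul_lt_mul_iff_right₀ hcpos
  by_cases h : normSq (zc u.val) < normSq (wc u.val)
  · rw [psitilde, psitilde, dif_pos h, dif_pos (hiff.2 h)]
    have hw : wc u.val ≠ 0 := wc_ne_zero h
    congr 1
    apply Subtype.ext
    show gneg u.val = gneg v.val
    rw [hc, gneg_smul (Units.ne_zero c) hw]
  · rw [psitilde, psitilde, dif_neg h, dif_neg (fun hh => h (hiff.1 hh))]
    have hgt : normSq (wc u.val) < normSq (zc u.val) :=
      lt_of_le_of_ne (not_lt.1 h) (nsz_ne_nsw u.2).symm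
    have hw : wc (Jmap u.val) ≠ 0 := by
      rw [wc_Jmap]
      intro h0
      rw [h0, normSq_zero] at hgt
      exact absurd hgt (not_lt.2 (normSq_nonneg _))
    congr 1
    apply Subtype.ext
    show gneg (Jmap u.val) = gneg (Jmap v.val)
    rw [hc, Jmap_smul, gneg_smul (Units.ne_zero c) hw]

def Dneg : Set D0 := {u | normSq (zc u.val) < normSq (wc u.val)}
def Dpos : Set D0 := {u | normSq (wc u.val) < normSq (zc u.val)}

theorem isOpen_Dneg : IsOpen Dneg :=
  isOpen_lt ((Complex.continuous_normSq.comp zc_continuous).comp continuous_subtype_val)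
    ((Complex.continuous_normSq.comp wc_continuous).comp continuous_subtype_val)

theorem isOpen_Dpos : IsOpen Dpos :=
  isOpen_lt ((Complex.continuous_normSq.comp wc_continuous).comp continuous_subtype_val)
    ((Complex.continuous_normSq.comp zc_continuous).comp continuous_subtype_val)

noncomputable def sumEquiv : (Dneg ⊕ Dpos) ≃ D0 := by
  refine Equiv.ofBijective (Sum.elim Subtype.val Subtype.val) ⟨?_, ?_⟩
  · rintro (x | x) (y | y) hxy
    · exact congrArg Sum.inl (Subtype.ext hxy)
    · exfalso
      have h1 : normSq (zc x.val.val) < normSq (wc x.val.val) := x.2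
      have h2 : normSq (wc y.val.val) < normSq (zc y.val.val) := y.2
      have h3 : (x.val : D0) = y.val := hxy
      rw [← h3] at h2
      exact lt_asymm h1 h2
    · exfalso
      have h1 : normSq (wc x.val.val) < normSq (zc x.val.val) := x.2
      have h2 : normSq (zc y.val.val) < normSq (wc y.val.val) := y.2
      have h3 : (x.val : D0) = y.val := hxy
      rw [← h3] at h2
      exact lt_asymm h1 h2
    · exact congrArg Sum.inr (Subtype.ext hxy)
  · intro u
    rcases lt_or_gt_of_ne (nsz_ne_nsw u.2) with h | h
    · exact ⟨Sum.inl ⟨u, h⟩, rfl⟩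
    · exact ⟨Sum.inr ⟨u, h⟩, rfl⟩

noncomputable def sumHomeo : (Dneg ⊕ Dpos) ≃ₜ D0 :=
  Equiv.toHomeomorphOfContinuousOpen sumEquiv
    (continuous_sumElim.mpr ⟨continuous_subtype_val, continuous_subtype_val⟩)
    (IsOpenMap.sumElim isOpen_Dneg.isOpenMap_subtype_val isOpen_Dpos.isOpenMap_subtype_val)

theorem gneg_continuousOn_neg : Continuous fun x : Dneg => gneg x.val.val := by
  apply continuous_pi
  intro j
  apply Continuous.div
  · exact (nvec_continuous j).comp (continuous_subtype_val.comp continuous_subtype_val)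
  · exact wc_continuous.comp (continuous_subtype_val.comp continuous_subtype_val)
  · exact fun x => wc_ne_zero x.2

theorem gneg_J_continuousOn_pos : Continuous fun x : Dpos => gneg (Jmap x.val.val) := by
  apply continuous_pi
  intro j
  apply Continuous.div
  · exact (nvec_continuous j).comp
      (Jmap_continuous.comp (continuous_subtype_val.comp continuous_subtype_val))
  · exact wc_continuous.comp
      (Jmap_continuous.comp (continuous_subtype_val.comp continuous_subtype_val))
  · intro x
    rw [wc_Jmap]
    intro h0
    have hlt : normSq (wc x.val.val) < normSq (zc x.val.val) := x.2
    rw [h0, normSq_zero] at hlt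
    exact absurd hlt (not_lt.2 (normSq_nonneg _))

theorem psitilde_continuous : Continuous psitilde := by
  rw [← sumHomeo.comp_continuous_iff']
  have heq : psitilde ∘ sumHomeo = Sum.elim
      (fun x : Dneg => Sum.inl (⟨gneg x.val.val, gneg_mem x.val.2 x.2⟩ : OmegaSet))
      (fun x : Dpos => Sum.inr (⟨gneg (Jmap x.val.val), gneg_mem (Jmap_mem x.val.2) (by
        rw [zc_Jmap, wc_Jmap]; exact x.2)⟩ : OmegaSet)) := by
    funext x
    rcases x with x | x
    · show psitilde x.val = _
      rw [psitilde,
        dif_pos (show normSq (zc x.val.val) < normSq (wc x.val.val) from x.2)]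
      rfl
    · show psitilde x.val = _
      have hnot : ¬ normSq (zc x.val.val) < normSq (wc x.val.val) :=
        not_lt.2 (le_of_lt (show normSq (wc x.val.val) < normSq (zc x.val.val) from x.2))
      rw [psitilde, dif_neg hnot]
      rfl
  rw [heq]
  refine continuous_sumElim.mpr ⟨?_, ?_⟩
  · exact continuous_inl.comp (Continuous.subtype_mk gneg_continuousOn_neg _)
  · exact continuous_inr.comp (Continuous.subtype_mk gneg_J_continuousOn_pos _)

theorem phitilde_continuous : Continuous phitilde := by
  refine continuous_sumElim.mpr ⟨?_, ?_⟩
  · exact Continuous.subtype_mk (sneg_continuous.comp continuous_subtype_val) _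
  · exact Continuous.subtype_mk
      ((Jmap_continuous.comp sneg_continuous).comp continuous_subtype_val) _

abbrev P0 := PeriodDomainTorus kzero

noncomputable def psi : P0 → (OmegaSet ⊕ OmegaSet) :=
  Quot.lift psitilde psitilde_resp

noncomputable def phi : (OmegaSet ⊕ OmegaSet) → P0 :=
  fun x => Quot.mk _ (phitilde x)

theorem psi_phi (x : OmegaSet ⊕ OmegaSet) : psi (phi x) = x := by
  rcases x with m | m
  · show psitilde ⟨sneg m.val, _⟩ = Sum.inl m
    have hlt : normSq (zc (sneg m.val)) < normSq (wc (sneg m.val)) := (sneg_mem m.2).2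
    rw [psitilde, dif_pos hlt]
    congr 1
    exact Subtype.ext gneg_sneg
  · show psitilde ⟨Jmap (sneg m.val), _⟩ = Sum.inr m
    have hlt : normSq (wc (Jmap (sneg m.val))) < normSq (zc (Jmap (sneg m.val))) := by
      rw [zc_Jmap, wc_Jmap]; exact (sneg_mem m.2).2
    rw [psitilde, dif_neg (not_lt.2 (le_of_lt hlt))]
    congr 1
    apply Subtype.ext
    show gneg (Jmap (Jmap (sneg m.val))) = m.val
    rw [Jmap_invol, gneg_sneg]

theorem phi_psi (x : P0) : phi (psi x) = x := by
  obtain ⟨u⟩ := x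
  show phi (psitilde u) = Quot.mk _ u
  by_cases h : normSq (zc u.val) < normSq (wc u.val)
  · rw [psitilde, dif_pos h]
    show Quot.mk _ (⟨sneg (gneg u.val), _⟩ : D0) = Quot.mk _ u
    apply Quot.sound
    have hw4 : wc u.val / 4 ≠ 0 := by
      have := wc_ne_zero h
      intro h0; apply this
      field_simp at h0
      simpa using h0
    exact ⟨Units.mk0 _ hw4, (sneg_gneg u.2 h).symm⟩
  · rw [psitilde, dif_neg h]
    show Quot.mk _ (⟨Jmap (sneg (gneg (Jmap u.val))), _⟩ : D0) = Quot.mk _ u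
    apply Quot.sound
    have hgt : normSq (wc u.val) < normSq (zc u.val) :=
      lt_of_le_of_ne (not_lt.1 h) (nsz_ne_nsw u.2).symm
    have hJlt : normSq (zc (Jmap u.val)) < normSq (wc (Jmap u.val)) := by
      rw [zc_Jmap, wc_Jmap]; exact hgt
    have hz4 : zc u.val / 4 ≠ 0 := by
      intro h0
      have : zc u.val = 0 := by field_simp at h0; simpa using h0
      rw [this, normSq_zero] at hgt
      exact absurd hgt (not_lt.2 (normSq_nonneg _))
    refine ⟨Units.mk0 _ hz4, ?_⟩
    have key := sneg_gneg (Jmap_mem u.2) hJlt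
    have := congrArg Jmap key
    rw [Jmap_smul, Jmap_invol, wc_Jmap] at this
    simp only [Units.val_mk0]
    exact this.symm

noncomputable def homeo0 : P0 ≃ₜ (OmegaSet ⊕ OmegaSet) where
  toFun := psi
  invFun := phi
  left_inv := phi_psi
  right_inv := psi_phi
  continuous_toFun := by
    apply continuous_quot_lift
    exact psitilde_continuous
  continuous_invFun := continuous_quot_mk.comp phitilde_continuous

end PDhomeo

section Reflection

/-- reflection in a real vector `v`, acting on `ℂ⁶` -/
noncomputable def reflC (v : Fin 6 → ℝ) (x : Fin 6 → ℂ) : Fin 6 → ℂ :=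
  fun i => x i - (2 * Btorus x (fun j => ((v j : ℝ) : ℂ)) / ((Btorus v v : ℝ) : ℂ)) * ((v i : ℝ) : ℂ)

/-- reflection in a real vector `v`, acting on `ℝ⁶` -/
noncomputable def reflR (v x : Fin 6 → ℝ) : Fin 6 → ℝ :=
  fun i => x i - (2 * Btorus x v / Btorus v v) * v i

variable {v : Fin 6 → ℝ} (hc : Btorus v v ≠ 0)

theorem reflC_coe (x : Fin 6 → ℝ) :
    reflC v (fun i => ((x i : ℝ) : ℂ)) = fun i => ((reflR v x i : ℝ) : ℂ) := by
  funext i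
  simp only [reflC, reflR, Btorus]
  push_cast
  ring

theorem reflC_B (x y : Fin 6 → ℂ) (hc : Btorus v v ≠ 0) :
    Btorus (reflC v x) (reflC v y) = Btorus x y := by
  have hcC : ((Btorus v v : ℝ) : ℂ) ≠ 0 := Complex.ofReal_ne_zero.2 hc
  simp only [Btorus] at hcC
  simp only [reflC, Btorus]
  push_cast at hcC ⊢
  ring_nf at hcC ⊢
  field_simp
  ring

theorem reflC_conj (x : Fin 6 → ℂ) :
    reflC v (fun i => (starRingEnd ℂ) (x i)) = fun i => (starRingEnd ℂ) (reflC v x i) := by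
  funext i
  simp only [reflC, Btorus, map_sub, map_mul, map_add, map_div₀, map_ofNat,
    Complex.conj_ofReal]

theorem reflC_smul (c : ℂ) (x : Fin 6 → ℂ) : reflC v (c • x) = c • reflC v x := by
  funext i
  simp only [reflC, Pi.smul_apply, smul_eq_mul, Btorus]
  ring

theorem reflC_invol (x : Fin 6 → ℂ) (hc : Btorus v v ≠ 0) : reflC v (reflC v x) = x := by
  have hcC : ((Btorus v v : ℝ) : ℂ) ≠ 0 := Complex.ofReal_ne_zero.2 hc
  simp only [Btorus] at hcC
  funext i
  simp only [reflC, Btorus]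
  push_cast at hcC ⊢
  ring_nf at hcC ⊢
  field_simp
  ring

theorem reflC_continuous : Continuous (reflC v) := by
  apply continuous_pi
  intro i
  simp only [reflC, Btorus]
  fun_prop

theorem reflR_add (x : Fin 6 → ℝ) (hc : Btorus v v ≠ 0)
    (h : 2 * Btorus x v = -(Btorus v v)) : reflR v x = fun i => x i + v i := by
  funext i
  rw [reflR, h]
  field_simp
  ring

theorem reflR_sub (x : Fin 6 → ℝ) (hc : Btorus v v ≠ 0)
    (h : 2 * Btorus x v = Btorus v v) : reflR v x = fun i => x i - v i := by
  funext i
  rw [reflR, h]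
  field_simp

end Reflection

theorem Btorus_mul_right (u : Fin 6 → ℂ) (t : ℂ) (x : Fin 6 → ℂ) :
    Btorus u (fun i => t * x i) = t * Btorus u x := by
  simp only [Btorus]; ring

theorem Btorus_neg_right (u : Fin 6 → ℂ) (x : Fin 6 → ℂ) :
    Btorus u (fun i => -x i) = -Btorus u x := by
  simp only [Btorus]; ring

section KappaRed

variable (κ : Fin 6 → ℝ) (t : ℝ) (v : Fin 6 → ℝ)

theorem refl_fwd (ht : t ≠ 0) (hv : Btorus v v ≠ 0)
    (hrefl : reflR v (fun i => t * kzero i) = κ ∨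
      reflR v (fun i => t * kzero i) = fun i => -κ i)
    {u : Fin 6 → ℂ} (hu : u ∈ Dtorus kzero) : reflC v u ∈ Dtorus κ := by
  obtain ⟨h1, h2, h3⟩ := hu
  refine ⟨by rw [reflC_B _ _ hv, h1], ?_, ?_⟩
  · have : (fun i => (starRingEnd ℂ) (reflC v u i)) = reflC v (fun i => (starRingEnd ℂ) (u i)) :=
      (reflC_conj _).symm
    rw [this, reflC_B _ _ hv]
    exact h2
  · have hk1 : Btorus u (fun i => (((fun i => t * kzero i) i : ℝ) : ℂ)) = 0 := by
      have : (fun i => (((fun i => t * kzero i) i : ℝ) : ℂ))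
          = fun i => (t : ℂ) * ((kzero i : ℝ) : ℂ) := by
        funext i; push_cast; ring
      rw [this, Btorus_mul_right, h3, mul_zero]
    rcases hrefl with hr | hr
    · have : (fun i => ((κ i : ℝ) : ℂ)) = reflC v (fun i => (((fun i => t * kzero i) i : ℝ) : ℂ)) := by
        rw [reflC_coe, hr]
      rw [this, reflC_B _ _ hv, hk1]
    · have : (fun i => ((κ i : ℝ) : ℂ))
          = fun i => -(reflC v (fun i => (((fun i => t * kzero i) i : ℝ) : ℂ)) i) := by
        rw [reflC_coe, hr]
        funext i
        push_cast
        ring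
      rw [this, Btorus_neg_right, reflC_B _ _ hv, hk1, neg_zero]

theorem refl_bwd (ht : t ≠ 0) (hv : Btorus v v ≠ 0)
    (hrefl : reflR v (fun i => t * kzero i) = κ ∨
      reflR v (fun i => t * kzero i) = fun i => -κ i)
    {u : Fin 6 → ℂ} (hu : u ∈ Dtorus κ) : reflC v u ∈ Dtorus kzero := by
  obtain ⟨h1, h2, h3⟩ := hu
  refine ⟨by rw [reflC_B _ _ hv, h1], ?_, ?_⟩
  · have : (fun i => (starRingEnd ℂ) (reflC v u i)) = reflC v (fun i => (starRingEnd ℂ) (u i)) :=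
      (reflC_conj _).symm
    rw [this, reflC_B _ _ hv]
    exact h2
  · have key : Btorus (reflC v u) (fun i => (((fun i => t * kzero i) i : ℝ) : ℂ)) = 0 := by
      have e1 : Btorus (reflC v u) (fun i => (((fun i => t * kzero i) i : ℝ) : ℂ))
          = Btorus u (reflC v (fun i => (((fun i => t * kzero i) i : ℝ) : ℂ))) := by
        conv_lhs => rw [show (fun i => (((fun i => t * kzero i) i : ℝ) : ℂ))
          = reflC v (reflC v (fun i => (((fun i => t * kzero i) i : ℝ) : ℂ))) from
            (reflC_invol _ hv).symm]
        rw [reflC_B _ _ hv]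
      rw [e1, reflC_coe]
      rcases hrefl with hr | hr
      · rw [hr]; exact h3
      · rw [hr]
        have : (fun i => ((-κ i : ℝ) : ℂ)) = fun i => -((κ i : ℝ) : ℂ) := by
          funext i; push_cast; ring
        rw [this, Btorus_neg_right, h3, neg_zero]
    have : Btorus (reflC v u) (fun i => (((fun i => t * kzero i) i : ℝ) : ℂ))
        = (t : ℂ) * Btorus (reflC v u) (fun i => ((kzero i : ℝ) : ℂ)) := by
      rw [← Btorus_mul_right]
      congr 1
      funext i
      push_cast
      ring
    rw [this] at key
    rcases mul_eq_zero.1 key with h | h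
    · exact absurd h (Complex.ofReal_ne_zero.2 ht)
    · exact h

noncomputable def homeoKappa (ht : t ≠ 0) (hv : Btorus v v ≠ 0)
    (hrefl : reflR v (fun i => t * kzero i) = κ ∨
      reflR v (fun i => t * kzero i) = fun i => -κ i) :
    PeriodDomainTorus kzero ≃ₜ PeriodDomainTorus κ where
  toFun := Quot.lift
    (fun u : Dtorus kzero => Quot.mk _ (⟨reflC v u.val, refl_fwd κ t v ht hv hrefl u.2⟩ : Dtorus κ))
    (by
      rintro a b ⟨c, hcb⟩
      apply Quot.sound
      exact ⟨c, by show reflC v b.val = _; rw [hcb, reflC_smul]⟩)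
  invFun := Quot.lift
    (fun u : Dtorus κ => Quot.mk _ (⟨reflC v u.val, refl_bwd κ t v ht hv hrefl u.2⟩ : Dtorus kzero))
    (by
      rintro a b ⟨c, hcb⟩
      apply Quot.sound
      exact ⟨c, by show reflC v b.val = _; rw [hcb, reflC_smul]⟩)
  left_inv := by
    intro x
    obtain ⟨u⟩ := x
    show Quot.mk _ (⟨reflC v (reflC v u.val), _⟩ : Dtorus kzero) = Quot.mk _ u
    congr 1
    exact Subtype.ext (reflC_invol _ hv)
  right_inv := by
    intro x
    obtain ⟨u⟩ := x
    show Quot.mk _ (⟨reflC v (reflC v u.val), _⟩ : Dtorus κ) = Quot.mk _ u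
    congr 1
    exact Subtype.ext (reflC_invol _ hv)
  continuous_toFun := by
    apply continuous_quot_lift
    exact continuous_quot_mk.comp
      (Continuous.subtype_mk (reflC_continuous.comp continuous_subtype_val) _)
  continuous_invFun := by
    apply continuous_quot_lift
    exact continuous_quot_mk.comp
      (Continuous.subtype_mk (reflC_continuous.comp continuous_subtype_val) _)

end KappaRed

theorem kz0 : kzero 0 = 1 := rfl
theorem kz1 : kzero 1 = 1 := rfl
theorem kz2 : kzero 2 = 0 := rfl
theorem kz3 : kzero 3 = 0 := rfl
theorem kz4 : kzero 4 = 0 := rfl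
theorem kz5 : kzero 5 = 0 := rfl

theorem periodDomain_two_contractible_components (κ : Fin 6 → ℝ)
    (hκpos : 0 < Btorus κ κ) :
    Nat.card (ConnectedComponents (PeriodDomainTorus κ)) = 2 ∧
      ∀ x : PeriodDomainTorus κ, ContractibleSpace (connectedComponent x) := by
  set q := Btorus κ κ with hq
  set t := Real.sqrt (q / 2) with htdef
  have hq2 : (0:ℝ) < q / 2 := by linarith
  have ht2 : t ^ 2 = q / 2 := Real.sq_sqrt (le_of_lt hq2)
  have ht0 : 0 < t := Real.sqrt_pos.2 hq2
  have ht : t ≠ 0 := ne_of_gt ht0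
  set κ₁ : Fin 6 → ℝ := fun i => t * kzero i with hκ₁
  have hB11 : Btorus κ₁ κ₁ = q := by
    simp only [Btorus, hκ₁, kz0, kz1, kz2, kz3, kz4, kz5]
    ring_nf
    nlinarith [ht2]
  set vm : Fin 6 → ℝ := fun i => κ i - κ₁ i with hvm
  set vp : Fin 6 → ℝ := fun i => κ i + κ₁ i with hvp
  have hsum : Btorus vm vm + Btorus vp vp = 4 * q := by
    have e : Btorus vm vm + Btorus vp vp = 2 * Btorus κ κ + 2 * Btorus κ₁ κ₁ := by
      simp only [Btorus, hvm, hvp]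
      ring
    rw [e, hB11, ← hq]
    ring
  have key : ∃ v : Fin 6 → ℝ, Btorus v v ≠ 0 ∧
      (reflR v (fun i => t * kzero i) = κ ∨
        reflR v (fun i => t * kzero i) = fun i => -κ i) := by
    by_cases hcm : Btorus vm vm = 0
    · refine ⟨vp, ?_, Or.inr ?_⟩
      · rw [hcm] at hsum
        intro h0
        rw [h0] at hsum
        simp at hsum
        linarith
      · have hvv : Btorus vp vp ≠ 0 := by
          rw [hcm] at hsum
          intro h0
          rw [h0] at hsum
          simp at hsum
          linarith
        have h2B : 2 * Btorus κ₁ vp = Btorus vp vp := by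
          have e : 2 * Btorus κ₁ vp - Btorus vp vp = Btorus κ₁ κ₁ - Btorus κ κ := by
            simp only [Btorus, hvp, hκ₁]
            ring
          rw [hB11, ← hq] at e
          linarith
        have := reflR_sub (v := vp) κ₁ hvv h2B
        rw [this]
        funext i
        simp only [hκ₁, hvp]
        ring
    · refine ⟨vm, hcm, Or.inl ?_⟩
      have h2B : 2 * Btorus κ₁ vm = -(Btorus vm vm) := by
        have e : 2 * Btorus κ₁ vm + Btorus vm vm = Btorus κ κ - Btorus κ₁ κ₁ := by
          simp only [Btorus, hvm, hκ₁]
          ring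
        rw [hB11, ← hq] at e
        linarith
      have := reflR_add (v := vm) κ₁ hcm h2B
      rw [this]
      funext i
      simp only [hκ₁, hvm]
      ring
  obtain ⟨v, hv, hrefl⟩ := key
  have homeo : PeriodDomainTorus κ ≃ₜ (↥OmegaSet ⊕ ↥OmegaSet) :=
    (homeoKappa κ t v ht hv hrefl).symm.trans PDhomeo.homeo0
  exact main_of_homeo homeo
end

section
/- Let B be the symmetric bilinear form on ℝ⁶ (restricting to ℤ⁶) given by B(x,y) = x₁y₂ + x₂y₁ + x₃y₄ + x₄y₃ + x₅y₆ + x₆y₅, and let κ ∈ ℝ⁶ be non-resonant, i.e. B(κ,κ) > 0 and B(κ,δ) ≠ 0 for every nonzero δ ∈ ℤ⁶. Then for all real numbers 0 < a < b, the set {δ ∈ ℤ⁶ : δ is primitive (the gcd of its coordinates is 1), B(δ,δ) = 0, and a < B(κ,δ) < b} is infinite. -/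
private lemma vec_eval6 (m n p : ℤ) :
    (![m,0,n,0,p,0] : Fin 6 → ℤ) 0 = m ∧ (![m,0,n,0,p,0] : Fin 6 → ℤ) 1 = 0
    ∧ (![m,0,n,0,p,0] : Fin 6 → ℤ) 2 = n ∧ (![m,0,n,0,p,0] : Fin 6 → ℤ) 3 = 0
    ∧ (![m,0,n,0,p,0] : Fin 6 → ℤ) 4 = p ∧ (![m,0,n,0,p,0] : Fin 6 → ℤ) 5 = 0 :=
  ⟨rfl, rfl, rfl, rfl, rfl, rfl⟩

private lemma Bκ_eval (κ : Fin 6 → ℝ) (m n p : ℤ) :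
    Btorus κ (fun i => ((![m,0,n,0,p,0] : Fin 6 → ℤ) i : ℝ)) =
      κ 1 * m + κ 3 * n + κ 5 * p := by
  obtain ⟨h0,h1,h2,h3,h4,h5⟩ := vec_eval6 m n p
  simp only [Btorus, h0,h1,h2,h3,h4,h5]
  push_cast; ring

private lemma Bδ_eval (m n p : ℤ) : Btorus ![m,0,n,0,p,0] ![m,0,n,0,p,0] = 0 := by
  obtain ⟨h0,h1,h2,h3,h4,h5⟩ := vec_eval6 m n p
  simp only [Btorus, h0,h1,h2,h3,h4,h5]; ring

private lemma gcd_eval (m n : ℤ) : Finset.univ.gcd ![m,0,n,0,1,0] = 1 := by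
  have h : Finset.univ.gcd ![m,0,n,0,1,0] ∣ (1 : ℤ) := by
    have := Finset.gcd_dvd (f := ![m,0,n,0,1,0]) (Finset.mem_univ (4 : Fin 6))
    simpa using this
  have h2 := Finset.normalize_gcd (s := (Finset.univ : Finset (Fin 6))) (f := ![m,0,n,0,1,0])
  have h3 : (0:ℤ) ≤ Finset.univ.gcd ![m,0,n,0,1,0] := by
    rw [← h2, ← Int.abs_eq_normalize]; exact abs_nonneg _
  rcases Int.isUnit_iff.mp (isUnit_of_dvd_one h) with h' | h' <;> omega

theorem torus_index_set_infinite (κ : Fin 6 → ℝ)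
    (hκpos : 0 < Btorus κ κ)
    (hκnr : ∀ δ : Fin 6 → ℤ, δ ≠ 0 → Btorus κ (fun i => (δ i : ℝ)) ≠ 0)
    (a b : ℝ) (ha : 0 < a) (hab : a < b) :
    {δ : Fin 6 → ℤ | Finset.univ.gcd δ = 1 ∧ Btorus δ δ = 0 ∧
      a < Btorus κ (fun i => (δ i : ℝ)) ∧
      Btorus κ (fun i => (δ i : ℝ)) < b}.Infinite := by
  -- the key non-resonance consequence for the linear form κ₁ m + κ₃ n
  have hlin : ∀ m n : ℤ, (m ≠ 0 ∨ n ≠ 0) → κ 1 * m + κ 3 * n ≠ 0 := by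
    intro m n hmn h
    have hδ : (![m,0,n,0,0,0] : Fin 6 → ℤ) ≠ 0 := by
      intro h0
      rcases hmn with hm | hn
      · exact hm (by simpa using congrFun h0 0)
      · exact hn (by simpa using congrFun h0 2)
    apply hκnr _ hδ
    rw [Bκ_eval]
    push_cast
    linarith [h]
  have hκ1 : κ 1 ≠ 0 := by
    have := hlin 1 0 (Or.inl one_ne_zero); simpa using this
  -- the subgroup generated by κ 1, κ 3 is dense
  let G : ℤ × ℤ →+ ℝ := AddMonoidHom.mk' (fun q => κ 1 * q.1 + κ 3 * q.2)
    (by intro q r; simp only [Prod.fst_add, Prod.snd_add]; push_cast; ring)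
  have hS : Dense ((G.range : AddSubgroup ℝ) : Set ℝ) := by
    rcases AddSubgroup.dense_or_cyclic G.range with h | ⟨x, hx⟩
    · exact h
    · exfalso
      have h1 : κ 1 ∈ G.range := ⟨(1, 0), by simp [G]⟩
      have h3 : κ 3 ∈ G.range := ⟨(0, 1), by simp [G]⟩
      rw [hx, AddSubgroup.mem_closure_singleton] at h1 h3
      obtain ⟨p, hp⟩ := h1
      obtain ⟨q, hq⟩ := h3
      have hp0 : p ≠ 0 := by
        rintro rfl; simp at hp; exact hκ1 hp.symm
      apply hlin q (-p) (Or.inr (by simpa using hp0))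
      push_cast
      rw [← hp, ← hq]
      push_cast [zsmul_eq_mul]
      ring
  -- the dense subgroup meets the open interval (a - κ 5, b - κ 5) in an infinite set
  have hab' : a - κ 5 < b - κ 5 := by linarith
  have hIinf : ((G.range : Set ℝ) ∩ Set.Ioo (a - κ 5) (b - κ 5)).Infinite := by
    intro hfin
    have hopen : IsOpen (Set.Ioo (a - κ 5) (b - κ 5) \ ((G.range : Set ℝ) ∩ Set.Ioo (a - κ 5) (b - κ 5))) :=
      isOpen_Ioo.sdiff hfin.isClosed
    have hne : (Set.Ioo (a - κ 5) (b - κ 5) \ ((G.range : Set ℝ) ∩ Set.Ioo (a - κ 5) (b - κ 5))).Nonempty := by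
      rcases ((Set.Ioo_infinite hab').diff hfin).nonempty with ⟨x, hx⟩
      exact ⟨x, hx⟩
    obtain ⟨x, hxS, hxo⟩ := hS.exists_mem_open hopen hne
    exact hxo.2 ⟨hxS, hxo.1⟩
  -- pull back to ℤ × ℤ
  have hpre : (G ⁻¹' ((G.range : Set ℝ) ∩ Set.Ioo (a - κ 5) (b - κ 5))).Infinite :=
    hIinf.preimage (fun x hx => hx.1)
  haveI : Infinite (G ⁻¹' ((G.range : Set ℝ) ∩ Set.Ioo (a - κ 5) (b - κ 5))) :=
    hpre.to_subtype
  apply Set.infinite_of_injective_forall_mem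
    (f := fun q : (G ⁻¹' ((G.range : Set ℝ) ∩ Set.Ioo (a - κ 5) (b - κ 5))) =>
      (![q.1.1, 0, q.1.2, 0, 1, 0] : Fin 6 → ℤ))
  · intro q r h
    have h0 : q.1.1 = r.1.1 := by simpa using congrFun h 0
    have h2 : q.1.2 = r.1.2 := by simpa using congrFun h 2
    exact Subtype.ext (Prod.ext h0 h2)
  · rintro ⟨⟨m, n⟩, hq⟩
    obtain ⟨-, hlo, hhi⟩ := hq
    refine ⟨gcd_eval m n, Bδ_eval m n 1, ?_, ?_⟩
    · rw [Bκ_eval]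
      push_cast
      have : G (m, n) = κ 1 * m + κ 3 * n := rfl
      rw [this] at hlo
      linarith
    · rw [Bκ_eval]
      push_cast
      have : G (m, n) = κ 1 * m + κ 3 * n := rfl
      rw [this] at hhi
      linarith
end

section
/- Let B be the symmetric bilinear form on ℝ²² (restricting to ℤ²²) whose Gram matrix is block diagonal consisting of three hyperbolic blocks [[0,1],[1,0]] followed by two copies of the negative of the standard E₈ Cartan matrix, and let κ ∈ ℝ²² be non-resonant, i.e. B(κ,κ) > 0 and B(κ,δ) ≠ 0 for every nonzero δ ∈ ℤ²². Then for all real numbers 0 < a < b, the set {δ ∈ ℤ²² : B(δ,δ) = −2 and a < B(κ,δ) < b} is infinite. -/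
lemma K3col0 : ∀ i : Fin 22, K3Gram i 0 = if i = 1 then 1 else 0 := by decide
lemma K3col1 : ∀ i : Fin 22, K3Gram i 1 = if i = 0 then 1 else 0 := by decide
lemma K3col2 : ∀ i : Fin 22, K3Gram i 2 = if i = 3 then 1 else 0 := by decide
lemma K3col3 : ∀ i : Fin 22, K3Gram i 3 = if i = 2 then 1 else 0 := by decide
lemma K3col4 : ∀ i : Fin 22, K3Gram i 4 = if i = 5 then 1 else 0 := by decide
lemma K3col5 : ∀ i : Fin 22, K3Gram i 5 = if i = 4 then 1 else 0 := by decide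

lemma BK3_support6 {R : Type*} [CommRing R] (x y : Fin 22 → R)
    (hy : ∀ j : Fin 22, 6 ≤ (j:ℕ) → y j = 0) :
    BK3 x y = x 1 * y 0 + x 0 * y 1 + x 3 * y 2 + x 2 * y 3 + x 5 * y 4 + x 4 * y 5 := by
  rw [BK3, Finset.sum_comm]
  have hsub : ({0,1,2,3,4,5} : Finset (Fin 22)) ⊆ Finset.univ := Finset.subset_univ _
  rw [← Finset.sum_subset hsub (by
    intro j _ hj
    have : y j = 0 := by
      apply hy; by_contra h; push_neg at h
      interval_cases h' : (j : ℕ) <;> simp_all <;> omega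
    simp [this])]
  rw [show ({0,1,2,3,4,5} : Finset (Fin 22)) = {0} ∪ {1} ∪ {2} ∪ {3} ∪ {4} ∪ {5} by rfl]
  simp [Finset.sum_union, Finset.sum_insert, K3col0, K3col1, K3col2, K3col3, K3col4, K3col5,
    Finset.sum_ite_eq', ite_mul, Finset.mul_sum]
  ring

lemma dense_subgroup_inter_Ioo_infinite (G : AddSubgroup ℝ) (hG : Dense (G : Set ℝ))
    (u v : ℝ) (huv : u < v) : ((G : Set ℝ) ∩ Set.Ioo u v).Infinite := by
  by_contra hfin
  rw [Set.not_infinite] at hfin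
  have hne : ((G : Set ℝ) ∩ Set.Ioo u v).Nonempty := by
    obtain ⟨g, hg1, hg2⟩ := hG.exists_mem_open isOpen_Ioo
      (⟨(u+v)/2, by constructor <;> linarith⟩ : (Set.Ioo u v).Nonempty)
    exact ⟨g, hg1, hg2⟩
  obtain ⟨x, hx, hmax'⟩ := Set.Finite.exists_maximal hfin hne
  have hmax : ∀ y ∈ (G : Set ℝ) ∩ Set.Ioo u v, id x ≤ id y → id x = id y :=
    fun y hy hxy => le_antisymm hxy (hmax' hy hxy)
  have hx2 := hx.2
  have hxv : x < v := hx2.2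
  obtain ⟨g, hg1, hg2⟩ := hG.exists_mem_open isOpen_Ioo
    (⟨(x + v)/2, by constructor <;> linarith⟩ : (Set.Ioo x v).Nonempty)
  have hgmem : g ∈ (G : Set ℝ) ∩ Set.Ioo u v := ⟨hg1, lt_trans hx2.1 hg2.1, hg2.2⟩
  have heq := hmax g hgmem (le_of_lt hg2.1)
  simp only [id] at heq
  exact absurd hg2.1 (by rw [heq]; exact lt_irrefl g)

/-- δ p q : the root (1, -1, p, 0, q, 0, 0, ...). -/
def K3root (p q : ℤ) : Fin 22 → ℤ := fun i =>
  if i = 0 then 1 else if i = 1 then -1 else if i = 2 then p else if i = 4 then q else 0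

lemma K3root_supp (p q : ℤ) : ∀ j : Fin 22, 6 ≤ (j:ℕ) → K3root p q j = 0 := by
  intro j hj
  unfold K3root
  have h0 : j ≠ 0 := by intro h; subst h; exact absurd hj (by decide)
  have h1 : j ≠ 1 := by intro h; subst h; exact absurd hj (by decide)
  have h2 : j ≠ 2 := by intro h; subst h; exact absurd hj (by decide)
  have h4 : j ≠ 4 := by intro h; subst h; exact absurd hj (by decide)
  simp [h0, h1, h2, h4]

lemma K3root_suppR (p q : ℤ) : ∀ j : Fin 22, 6 ≤ (j:ℕ) → ((K3root p q j : ℝ)) = 0 := by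
  intro j hj; rw [K3root_supp p q j hj]; exact Int.cast_zero

lemma K3root_self (p q : ℤ) : BK3 (K3root p q) (K3root p q) = -2 := by
  rw [BK3_support6 _ _ (K3root_supp p q)]
  simp [K3root]

lemma K3root_pair (κ : Fin 22 → ℝ) (p q : ℤ) :
    BK3 κ (fun i => ((K3root p q i : ℝ))) = (κ 1 - κ 0) + p * κ 3 + q * κ 5 := by
  rw [BK3_support6 _ _ (K3root_suppR p q)]
  simp [K3root]
  ring

theorem K3_index_set_infinite (κ : Fin 22 → ℝ)
    (hκpos : 0 < BK3 κ κ)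
    (hκnr : ∀ δ : Fin 22 → ℤ, δ ≠ 0 → BK3 κ (fun i => (δ i : ℝ)) ≠ 0)
    (a b : ℝ) (ha : 0 < a) (hab : a < b) :
    {δ : Fin 22 → ℤ | BK3 δ δ = -2 ∧
      a < BK3 κ (fun i => (δ i : ℝ)) ∧
      BK3 κ (fun i => (δ i : ℝ)) < b}.Infinite := by
  set α := κ 3 with hα
  set β := κ 5 with hβ
  set c := κ 1 - κ 0 with hc
  -- non-resonance for combinations p α + q β
  have key : ∀ p q : ℤ, (p ≠ 0 ∨ q ≠ 0) → (p : ℝ) * α + (q : ℝ) * β ≠ 0 := by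
    intro p q hpq
    set δ' : Fin 22 → ℤ := fun i => if i = 2 then p else if i = 4 then q else 0 with hδ'
    have hsupp : ∀ j : Fin 22, 6 ≤ (j:ℕ) → ((δ' j : ℝ)) = 0 := by
      intro j hj
      have h2 : j ≠ 2 := by intro h; subst h; exact absurd hj (by decide)
      have h4 : j ≠ 4 := by intro h; subst h; exact absurd hj (by decide)
      simp [hδ', h2, h4]
    have hne : δ' ≠ 0 := by
      intro h
      rcases hpq with hp | hq
      · exact hp (by have := congrFun h 2; simpa [hδ'] using this)
      · exact hq (by have := congrFun h 4; simpa [hδ'] using this)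
    have := hκnr δ' hne
    rw [BK3_support6 _ _ hsupp] at this
    have this2 : κ 3 * (p:ℝ) + κ 5 * (q:ℝ) ≠ 0 := by simpa [hδ'] using this
    intro h
    apply this2
    rw [hα, hβ] at h
    linear_combination h
  have hαne : α ≠ 0 := by
    have := key 1 0 (Or.inl one_ne_zero); simpa using this
  have hβne : β ≠ 0 := by
    have := key 0 1 (Or.inr one_ne_zero); simpa using this
  -- the subgroup generated by α and β
  set G : AddSubgroup ℝ :=
    { carrier := {x | ∃ p q : ℤ, x = (p : ℝ) * α + (q : ℝ) * β}
      zero_mem' := ⟨0, 0, by norm_num⟩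
      add_mem' := by
        rintro x y ⟨p, q, rfl⟩ ⟨p', q', rfl⟩
        exact ⟨p + p', q + q', by push_cast; ring⟩
      neg_mem' := by
        rintro x ⟨p, q, rfl⟩
        exact ⟨-p, -q, by push_cast; ring⟩ } with hG
  have hGdense : Dense (G : Set ℝ) := by
    rcases G.dense_or_cyclic with h | ⟨g, hg⟩
    · exact h
    · exfalso
      have hαG : α ∈ G := ⟨1, 0, by norm_num⟩
      have hβG : β ∈ G := ⟨0, 1, by norm_num⟩
      rw [hg, AddSubgroup.mem_closure_singleton] at hαG hβG
      obtain ⟨n, hn⟩ := hαG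
      obtain ⟨m, hm⟩ := hβG
      have hn0 : n ≠ 0 := by rintro rfl; simp at hn; exact hαne hn.symm
      have hm0 : m ≠ 0 := by rintro rfl; simp at hm; exact hβne hm.symm
      have : (m : ℝ) * α + (-(n:ℝ)) * β = 0 := by
        rw [← hn, ← hm]; push_cast [zsmul_eq_mul]; ring
      exact key m (-n) (Or.inl hm0) (by push_cast; linear_combination this)
  -- infinitely many group elements in (a - c, b - c)
  have hV := dense_subgroup_inter_Ioo_infinite G hGdense (a - c) (b - c) (by linarith)
  -- pull back to pairs (p, q)
  set T : Set (ℤ × ℤ) := {pq | a < c + (pq.1 : ℝ) * α + (pq.2 : ℝ) * β ∧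
      c + (pq.1 : ℝ) * α + (pq.2 : ℝ) * β < b} with hT
  have hTinf : T.Infinite := by
    have hsub : ((G : Set ℝ) ∩ Set.Ioo (a - c) (b - c)) ⊆
        (fun pq : ℤ × ℤ => (pq.1 : ℝ) * α + (pq.2 : ℝ) * β) '' T := by
      rintro x ⟨⟨p, q, rfl⟩, hx1, hx2⟩
      refine ⟨(p, q), ?_, rfl⟩
      simp only [hT, Set.mem_setOf_eq]
      exact ⟨by linarith, by linarith⟩
    exact Set.Infinite.of_image _ (hV.mono hsub)
  -- map into the root set
  have hmono : (fun pq : ℤ × ℤ => K3root pq.1 pq.2) '' T ⊆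
      {δ : Fin 22 → ℤ | BK3 δ δ = -2 ∧
        a < BK3 κ (fun i => (δ i : ℝ)) ∧
        BK3 κ (fun i => (δ i : ℝ)) < b} := by
    rintro δ ⟨⟨p, q⟩, hpq, rfl⟩
    simp only [hT, Set.mem_setOf_eq] at hpq
    rw [hc, hα, hβ] at hpq
    refine ⟨K3root_self p q, ?_, ?_⟩
    · rw [K3root_pair]; linarith [hpq.1]
    · rw [K3root_pair]; linarith [hpq.2]
  have hinj : Set.InjOn (fun pq : ℤ × ℤ => K3root pq.1 pq.2) T := by
    rintro ⟨p, q⟩ _ ⟨p', q'⟩ _ h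
    have h2 := congrFun h 2
    have h4 := congrFun h 4
    simp [K3root] at h2 h4
    simp [h2, h4]
  exact Set.Infinite.mono hmono (hTinf.image hinj)
end
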